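/- arXiv:2401.13774 — 2 statements merged into one kernel-verified Lean document; each statement's English description precedes it below -/
import Mathlib

section
/- (Covariance / module-algebra property.) The right action φ ◁ (a⊗h) = ⟨a h₍₁₎, φ₍₁₎⟩ ⟨S(h₍₂₎), φ₍₃₎⟩ φ₍₂₎ makes H^{*op} a right M(H)-module algebra: for all φ, ψ ∈ H* and x = a⊗h ∈ M(H), (φ ∗op ψ) ◁ x = Σ (φ ◁ x₍₁₎) ∗op (ψ ◁ x₍₂₎), where ∗op denotes the opposite multiplication of H* and Δ_M(x) = x₍₁₎ ⊗ x₍₂₎ is the coproduct of M(H); moreover 1_{H*} ◁ x = ε_M(x)·1_{H*}. -/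
/-!
Common setup for formalizing "Ribbon operators in the semidual lattice code model"
(Soglohu–Osei–Osumanu).

`H` is a Hopf algebra over `ℂ`.  Its dual Hopf algebra `H*` is realised as
`Module.Dual ℂ H`, with evaluation pairing `⟨h, φ⟩ = φ h`.  The multiplication of
`H*` is dual to the comultiplication of `H` and the comultiplication of `H*` is
dual to the multiplication of `H`; consequently every edge operator below, given
in the paper by a Sweedler formula on `H*`, is pre-composition
(`LinearMap.dualMap`) with an explicit linear endomorphism of `H`.  For instance
`L^h₊(φ) = ⟨h, S(φ₍₁₎) φ₍₃₎⟩ φ₍₂₎` is exactly `(L^h₊ φ)(x) = Σ φ (S h₍₁₎ * x * h₍₂₎)`.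
Since the antipode is assumed involutive (`S⁻¹ = S`), occurrences of `S⁻¹` are
rendered as `S`.
-/

open TensorProduct

noncomputable section

namespace SemidualKitaev

variable {H : Type} [Ring H] [HopfAlgebra ℂ H]

/-- The antipode of `H`. -/
abbrev S : H →ₗ[ℂ] H := HopfAlgebra.antipode (R := ℂ)

/-- The comultiplication of `H`. -/
abbrev Δ : H →ₗ[ℂ] H ⊗[ℂ] H := Coalgebra.comul (R := ℂ)

/-- The counit of `H`. -/
abbrev ε : H →ₗ[ℂ] ℂ := Coalgebra.counit (R := ℂ)

/-- `sandwich (u ⊗ v) : x ↦ u * x * v`. -/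
def sandwich : H ⊗[ℂ] H →ₗ[ℂ] H →ₗ[ℂ] H :=
  TensorProduct.lift <| LinearMap.mk₂ ℂ
    (fun u v => (LinearMap.mulRight ℂ v) ∘ₗ (LinearMap.mulLeft ℂ u))
    (fun u u' v => LinearMap.ext fun x => by simp [add_mul])
    (fun c u v => LinearMap.ext fun x => by simp [smul_mul_assoc])
    (fun u v v' => LinearMap.ext fun x => by simp [mul_add])
    (fun c u v => LinearMap.ext fun x => by simp [mul_smul_comm])

@[simp] lemma sandwich_tmul (u v x : H) : sandwich (u ⊗ₜ[ℂ] v) x = u * x * v := rfl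

/-! ### Edge (triangle) operators on `H* = Module.Dual ℂ H`

Left-module versions (eq. (3.3) of the paper). -/

/-- `L^h₊(φ) = ⟨h, S(φ₍₁₎) φ₍₃₎⟩ φ₍₂₎`, i.e. `(L^h₊ φ)(x) = Σ φ (S h₍₁₎ * x * h₍₂₎)`. -/
def Lp (h : H) : Module.Dual ℂ H →ₗ[ℂ] Module.Dual ℂ H :=
  (sandwich ((TensorProduct.map S LinearMap.id) (Δ h))).dualMap

/-- `L^h₋(φ) = ⟨h, φ₍₃₎ S⁻¹(φ₍₁₎)⟩ φ₍₂₎`, i.e. `(L^h₋ φ)(x) = Σ φ (S⁻¹ h₍₂₎ * x * h₍₁₎)`,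
with `S⁻¹ = S`. -/
def Lm (h : H) : Module.Dual ℂ H →ₗ[ℂ] Module.Dual ℂ H :=
  (sandwich ((TensorProduct.map S LinearMap.id) ((TensorProduct.comm ℂ H H) (Δ h)))).dualMap

/-- `T^a₊(φ) = ⟨S a, φ₍₁₎⟩ φ₍₂₎`, i.e. `(T^a₊ φ)(x) = φ (S a * x)`. -/
def Tp (a : H) : Module.Dual ℂ H →ₗ[ℂ] Module.Dual ℂ H :=
  (LinearMap.mulLeft ℂ (S a)).dualMap

/-- `T^a₋(φ) = ⟨a, φ₍₂₎⟩ φ₍₁₎`, i.e. `(T^a₋ φ)(x) = φ (x * a)`. -/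
def Tm (a : H) : Module.Dual ℂ H →ₗ[ℂ] Module.Dual ℂ H :=
  (LinearMap.mulRight ℂ a).dualMap

/-! Right-module versions (eq. (3.14) of the paper). -/

/-- `L̃^h₊(φ) = ⟨h, S(φ₍₃₎) φ₍₁₎⟩ φ₍₂₎`, i.e. `(L̃^h₊ φ)(x) = Σ φ (h₍₂₎ * x * S h₍₁₎)`. -/
def Ltp (h : H) : Module.Dual ℂ H →ₗ[ℂ] Module.Dual ℂ H :=
  (sandwich ((TensorProduct.map LinearMap.id S) ((TensorProduct.comm ℂ H H) (Δ h)))).dualMap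

/-- `L̃^h₋(φ) = ⟨h, φ₍₁₎ S⁻¹(φ₍₃₎)⟩ φ₍₂₎`, i.e. `(L̃^h₋ φ)(x) = Σ φ (h₍₁₎ * x * S⁻¹ h₍₂₎)`,
with `S⁻¹ = S`. -/
def Ltm (h : H) : Module.Dual ℂ H →ₗ[ℂ] Module.Dual ℂ H :=
  (sandwich ((TensorProduct.map LinearMap.id S) (Δ h))).dualMap

/-- `T̃^a₊(φ) = ⟨a, φ₍₁₎⟩ φ₍₂₎`, i.e. `(T̃^a₊ φ)(x) = φ (a * x)`. -/
def Ttp (a : H) : Module.Dual ℂ H →ₗ[ℂ] Module.Dual ℂ H :=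
  (LinearMap.mulLeft ℂ a).dualMap

/-- `T̃^a₋(φ) = ⟨S⁻¹ a, φ₍₂₎⟩ φ₍₁₎`, i.e. `(T̃^a₋ φ)(x) = φ (x * S⁻¹ a)`, with `S⁻¹ = S`. -/
def Ttm (a : H) : Module.Dual ℂ H →ₗ[ℂ] Module.Dual ℂ H :=
  (LinearMap.mulRight ℂ (S a)).dualMap

/-- The antipode `S_{H*}` of the dual Hopf algebra: `S_{H*}(φ) = φ ∘ S`. -/
def Sdual : Module.Dual ℂ H →ₗ[ℂ] Module.Dual ℂ H := (S (H := H)).dualMap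

/-- The composite edge operator `M^{(a,h)}₊ = T^a₊ ∘ L^h₊`. -/
def Mp (a h : H) : Module.Dual ℂ H →ₗ[ℂ] Module.Dual ℂ H := Tp a ∘ₗ Lp h

/-- The composite edge operator `M^{(a,h)}₋ = T^a₋ ∘ L^h₋`. -/
def Mm (a h : H) : Module.Dual ℂ H →ₗ[ℂ] Module.Dual ℂ H := Tm a ∘ₗ Lm h

/-- The right action of `M(H)` on `H*` (eq. (2.10) of the paper):
`φ ◁ (a ⊗ h) = ⟨a h₍₁₎, φ₍₁₎⟩ ⟨S h₍₂₎, φ₍₃₎⟩ φ₍₂₎`,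
i.e. `(ract φ a h)(x) = Σ φ (a * h₍₁₎ * x * S h₍₂₎)`. -/
def ract (φ : Module.Dual ℂ H) (a h : H) : Module.Dual ℂ H :=
  (sandwich ((TensorProduct.map (LinearMap.mulLeft ℂ a) S) (Δ h))).dualMap φ

/-- The (convolution) multiplication of the dual Hopf algebra `H*`:
`(φ ∗ ψ)(x) = Σ φ(x₍₁₎) ψ(x₍₂₎)`. -/
def dualMul (φ ψ : Module.Dual ℂ H) : Module.Dual ℂ H :=
  (LinearMap.mul' ℂ ℂ) ∘ₗ (TensorProduct.map φ ψ) ∘ₗ Δ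

/-- The opposite multiplication `∗op` of `H*`. -/
def dualMulOp (φ ψ : Module.Dual ℂ H) : Module.Dual ℂ H := dualMul ψ φ

/-! ### Iterated comultiplications, `Δⁿ h = Σ h₍₁₎ ⊗ (h₍₂₎ ⊗ (⋯ ⊗ h₍ₙ₊₁₎))` -/

def Δ2 : H →ₗ[ℂ] H ⊗[ℂ] (H ⊗[ℂ] H) := (LinearMap.lTensor H Δ) ∘ₗ Δ
def Δ3 : H →ₗ[ℂ] H ⊗[ℂ] (H ⊗[ℂ] (H ⊗[ℂ] H)) := (LinearMap.lTensor H Δ2) ∘ₗ Δ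
def Δ4 : H →ₗ[ℂ] H ⊗[ℂ] (H ⊗[ℂ] (H ⊗[ℂ] (H ⊗[ℂ] H))) := (LinearMap.lTensor H Δ3) ∘ₗ Δ
def Δ5 : H →ₗ[ℂ] H ⊗[ℂ] (H ⊗[ℂ] (H ⊗[ℂ] (H ⊗[ℂ] (H ⊗[ℂ] H)))) :=
  (LinearMap.lTensor H Δ4) ∘ₗ Δ
def Δ6 : H →ₗ[ℂ] H ⊗[ℂ] (H ⊗[ℂ] (H ⊗[ℂ] (H ⊗[ℂ] (H ⊗[ℂ] (H ⊗[ℂ] H))))) :=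
  (LinearMap.lTensor H Δ5) ∘ₗ Δ
def Δ7 : H →ₗ[ℂ] H ⊗[ℂ] (H ⊗[ℂ] (H ⊗[ℂ] (H ⊗[ℂ] (H ⊗[ℂ] (H ⊗[ℂ] (H ⊗[ℂ] H)))))) :=
  (LinearMap.lTensor H Δ6) ∘ₗ Δ
def Δ8 : H →ₗ[ℂ]
    H ⊗[ℂ] (H ⊗[ℂ] (H ⊗[ℂ] (H ⊗[ℂ] (H ⊗[ℂ] (H ⊗[ℂ] (H ⊗[ℂ] (H ⊗[ℂ] H))))))) :=
  (LinearMap.lTensor H Δ7) ∘ₗ Δ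
def Δ9 : H →ₗ[ℂ]
    H ⊗[ℂ] (H ⊗[ℂ] (H ⊗[ℂ] (H ⊗[ℂ] (H ⊗[ℂ] (H ⊗[ℂ] (H ⊗[ℂ] (H ⊗[ℂ] (H ⊗[ℂ] H)))))))) :=
  (LinearMap.lTensor H Δ8) ∘ₗ Δ

lemma mulLeft_add (a a' : H) :
    LinearMap.mulLeft ℂ (a + a') = LinearMap.mulLeft ℂ a + LinearMap.mulLeft ℂ a' :=
  LinearMap.ext fun x => add_mul a a' x

lemma mulLeft_smul (c : ℂ) (a : H) :
    LinearMap.mulLeft ℂ (c • a) = c • LinearMap.mulLeft ℂ a :=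
  LinearMap.ext fun x => smul_mul_assoc c a x

/-! ### The mirror bicrossproduct `M(H) = H^cop ⋈ H` on the vector space `H ⊗ H` -/

/-- `(h₍₁₎ ⊗ h₍₂₎) ⊗ h₍₃₎` version of the 2-fold comultiplication. -/
def Δ2' : H →ₗ[ℂ] (H ⊗[ℂ] H) ⊗[ℂ] H := (LinearMap.rTensor H Δ) ∘ₗ Δ

/-- `mulAction2 ((u ⊗ v) ⊗ w) (b ⊗ g) = (u * b * v) ⊗ (w * g)`. -/
def mulAction2 : (H ⊗[ℂ] H) ⊗[ℂ] H →ₗ[ℂ] (H ⊗[ℂ] H) →ₗ[ℂ] (H ⊗[ℂ] H) :=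
  TensorProduct.lift <| LinearMap.mk₂ ℂ
    (fun (uv : H ⊗[ℂ] H) (w : H) =>
      TensorProduct.map (sandwich uv) (LinearMap.mulLeft ℂ w))
    (fun uv uv' w => by (try dsimp only); rw [map_add, TensorProduct.map_add_left])
    (fun c uv w => by (try dsimp only); rw [map_smul, TensorProduct.map_smul_left])
    (fun uv w w' => by (try dsimp only); rw [mulLeft_add, TensorProduct.map_add_right])
    (fun c uv w => by (try dsimp only); rw [mulLeft_smul, TensorProduct.map_smul_right])

/-- The product of the mirror bicrossproduct `M(H)`:
`μM (a ⊗ h) (b ⊗ g) = Σ (a * h₍₁₎ * b * S h₍₂₎) ⊗ (h₍₃₎ * g)`. -/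
def μM : (H ⊗[ℂ] H) →ₗ[ℂ] (H ⊗[ℂ] H) →ₗ[ℂ] (H ⊗[ℂ] H) :=
  TensorProduct.lift <| LinearMap.mk₂ ℂ
    (fun (a h : H) =>
      mulAction2 ((TensorProduct.map (TensorProduct.map (LinearMap.mulLeft ℂ a) S)
        LinearMap.id) (Δ2' h)))
    (fun a a' h => by
      try dsimp only
      rw [mulLeft_add, TensorProduct.map_add_left, TensorProduct.map_add_left,
        LinearMap.add_apply, map_add])
    (fun c a h => by
      try dsimp only
      rw [mulLeft_smul, TensorProduct.map_smul_left, TensorProduct.map_smul_left,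
        LinearMap.smul_apply, map_smul])
    (fun a h h' => by (try dsimp only); rw [map_add, map_add, map_add])
    (fun c a h => by (try dsimp only); rw [map_smul, map_smul, map_smul])

/-- The unit `1 ⊗ 1` of `M(H)`. -/
def oneM : H ⊗[ℂ] H := (1 : H) ⊗ₜ[ℂ] (1 : H)

/-- The counit of `M(H)`: `εM (a ⊗ h) = ε a * ε h`. -/
def εM : H ⊗[ℂ] H →ₗ[ℂ] ℂ :=
  (TensorProduct.lid ℂ ℂ).toLinearMap ∘ₗ TensorProduct.map ε ε

/-- Auxiliary map for the coproduct of `M(H)`: for fixed `a₁, a₂`, it sends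
`h₁ ⊗ (h₂ ⊗ (h₃ ⊗ h₄))` to `(a₂ ⊗ h₂) ⊗ ((a₁ * h₁ * S h₃) ⊗ h₄)`. -/
def deltaMAux (a₁ a₂ : H) :
    H ⊗[ℂ] (H ⊗[ℂ] (H ⊗[ℂ] H)) →ₗ[ℂ] (H ⊗[ℂ] H) ⊗[ℂ] (H ⊗[ℂ] H) :=
  (TensorProduct.map (TensorProduct.mk ℂ H H a₂) LinearMap.id) ∘ₗ
  (TensorProduct.map LinearMap.id
    (TensorProduct.map (LinearMap.mul' ℂ H) LinearMap.id)) ∘ₗ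
  (TensorProduct.map LinearMap.id (TensorProduct.assoc ℂ H H H).symm.toLinearMap) ∘ₗ
  (TensorProduct.assoc ℂ H H (H ⊗[ℂ] H)).toLinearMap ∘ₗ
  (TensorProduct.map (TensorProduct.comm ℂ H H).toLinearMap LinearMap.id) ∘ₗ
  (TensorProduct.assoc ℂ H H (H ⊗[ℂ] H)).symm.toLinearMap ∘ₗ
  (TensorProduct.map (LinearMap.mulLeft ℂ a₁)
    (TensorProduct.map LinearMap.id (TensorProduct.map S LinearMap.id)))

lemma deltaMAux_add_left (a₁ a₁' a₂ : H) :
    deltaMAux (a₁ + a₁') a₂ = deltaMAux a₁ a₂ + deltaMAux (H := H) a₁' a₂ := by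
  unfold deltaMAux
  rw [mulLeft_add, TensorProduct.map_add_left]
  simp only [LinearMap.comp_add]

lemma deltaMAux_smul_left (c : ℂ) (a₁ a₂ : H) :
    deltaMAux (c • a₁) a₂ = c • deltaMAux (H := H) a₁ a₂ := by
  unfold deltaMAux
  rw [mulLeft_smul, TensorProduct.map_smul_left]
  simp only [LinearMap.comp_smul]

lemma deltaMAux_add_right (a₁ a₂ a₂' : H) :
    deltaMAux a₁ (a₂ + a₂') = deltaMAux a₁ a₂ + deltaMAux (H := H) a₁ a₂' := by
  unfold deltaMAux
  rw [map_add, TensorProduct.map_add_left]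
  simp only [LinearMap.add_comp]

lemma deltaMAux_smul_right (c : ℂ) (a₁ a₂ : H) :
    deltaMAux a₁ (c • a₂) = c • deltaMAux (H := H) a₁ a₂ := by
  unfold deltaMAux
  rw [map_smul, TensorProduct.map_smul_left]
  simp only [LinearMap.smul_comp]

/-- `deltaG (a₁ ⊗ a₂) = deltaMAux a₁ a₂`, assembled linearly. -/
def deltaG : H ⊗[ℂ] H →ₗ[ℂ]
    (H ⊗[ℂ] (H ⊗[ℂ] (H ⊗[ℂ] H)) →ₗ[ℂ] (H ⊗[ℂ] H) ⊗[ℂ] (H ⊗[ℂ] H)) :=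
  TensorProduct.lift <| LinearMap.mk₂ ℂ deltaMAux
    deltaMAux_add_left deltaMAux_smul_left deltaMAux_add_right deltaMAux_smul_right

/-- The coproduct of `M(H)`:
`ΔM (a ⊗ h) = Σ (a₍₂₎ ⊗ h₍₂₎) ⊗ ((a₍₁₎ * h₍₁₎ * S h₍₃₎) ⊗ h₍₄₎)`. -/
def ΔM : H ⊗[ℂ] H →ₗ[ℂ] (H ⊗[ℂ] H) ⊗[ℂ] (H ⊗[ℂ] H) :=
  TensorProduct.lift <| LinearMap.mk₂ ℂ
    (fun (a h : H) => (deltaG (Δ a)) (Δ3 h))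
    (fun a a' h => by (try dsimp only); rw [map_add, map_add, LinearMap.add_apply])
    (fun c a h => by (try dsimp only); rw [map_smul, map_smul, LinearMap.smul_apply])
    (fun a h h' => by (try dsimp only); rw [map_add, map_add])
    (fun c a h => by (try dsimp only); rw [map_smul, map_smul])

/-- The componentwise (tensor-square) product on `M(H) ⊗ M(H)`. -/
def tensorMul2 :
    ((H ⊗[ℂ] H) ⊗[ℂ] (H ⊗[ℂ] H)) →ₗ[ℂ] ((H ⊗[ℂ] H) ⊗[ℂ] (H ⊗[ℂ] H)) →ₗ[ℂ]
      ((H ⊗[ℂ] H) ⊗[ℂ] (H ⊗[ℂ] H)) :=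
  TensorProduct.lift <| LinearMap.mk₂ ℂ
    (fun (u v : H ⊗[ℂ] H) => TensorProduct.map (μM u) (μM v))
    (fun u u' v => by (try dsimp only); rw [map_add, TensorProduct.map_add_left])
    (fun c u v => by (try dsimp only); rw [map_smul, TensorProduct.map_smul_left])
    (fun u v v' => by (try dsimp only); rw [map_add, TensorProduct.map_add_right])
    (fun c u v => by (try dsimp only); rw [map_smul, TensorProduct.map_smul_right])

/-- The antipode candidate of `M(H)`:
`SM (a ⊗ h) = Σ (1 ⊗ S h₍₂₎) · (S (a * h₍₁₎ * S h₍₃₎) ⊗ 1)`,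
where `·` is the mirror product `μM`. -/
def SM : H ⊗[ℂ] H →ₗ[ℂ] H ⊗[ℂ] H :=
  TensorProduct.lift <| LinearMap.mk₂ ℂ
    (fun (a h : H) =>
      (TensorProduct.lift μM)
        ((TensorProduct.map
            ((TensorProduct.mk ℂ H H 1) ∘ₗ S)
            (((TensorProduct.mk ℂ H H).flip 1) ∘ₗ S ∘ₗ (LinearMap.mul' ℂ H) ∘ₗ
              (TensorProduct.map (LinearMap.mulLeft ℂ a) S)))
          ((TensorProduct.assoc ℂ H H H).toLinearMap
            ((TensorProduct.map (TensorProduct.comm ℂ H H).toLinearMap LinearMap.id)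
              ((TensorProduct.assoc ℂ H H H).symm.toLinearMap (Δ2 h))))))
    (fun a a' h => by
      try dsimp only
      rw [mulLeft_add, TensorProduct.map_add_left, LinearMap.comp_add, LinearMap.comp_add,
        LinearMap.comp_add, TensorProduct.map_add_right, LinearMap.add_apply, map_add])
    (fun c a h => by
      try dsimp only
      rw [mulLeft_smul, TensorProduct.map_smul_left, LinearMap.comp_smul, LinearMap.comp_smul,
        LinearMap.comp_smul, TensorProduct.map_smul_right, LinearMap.smul_apply, map_smul])
    (fun a h h' => by (try dsimp only); simp only [map_add])
    (fun c a h => by (try dsimp only); simp only [map_smul])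

/-- `ℓ ∈ H` is a normalized (two-sided) Haar integral:
`x ℓ = ε(x) ℓ = ℓ x` for all `x`, and `ε(ℓ) = 1`. -/
def IsHaarIntegral (ℓ : H) : Prop :=
  ε ℓ = 1 ∧ ∀ x : H, x * ℓ = ε x • ℓ ∧ ℓ * x = ε x • ℓ

/-- Fourfold tensor product of operators on `H*`, acting on the four edges
`ψ¹ ⊗ (ψ² ⊗ (ψ³ ⊗ ψ⁴))`. -/
def map4 (f₁ f₂ f₃ f₄ : Module.Dual ℂ H →ₗ[ℂ] Module.Dual ℂ H) :
    Module.Dual ℂ H ⊗[ℂ] (Module.Dual ℂ H ⊗[ℂ] (Module.Dual ℂ H ⊗[ℂ] Module.Dual ℂ H))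
      →ₗ[ℂ]
    Module.Dual ℂ H ⊗[ℂ] (Module.Dual ℂ H ⊗[ℂ] (Module.Dual ℂ H ⊗[ℂ] Module.Dual ℂ H)) :=
  TensorProduct.map f₁ (TensorProduct.map f₂ (TensorProduct.map f₃ f₄))



/-! ### Auxiliary development for Statement 11 -/

section Statement11Aux

open LinearMap TensorProduct Coalgebra HopfAlgebra Bialgebra

/-- `∑ ε(right) • left = a` for any Sweedler representation. -/
lemma repr_sum_counit_right {a : H} {ι : Type} (r : Coalgebra.Repr ℂ a ι) :
    ∑ i ∈ r.index, ε (r.right i) • r.left i = a := by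
  have h := congrArg (TensorProduct.rid ℂ H) (Coalgebra.sum_tmul_counit_eq r)
  rw [map_sum] at h
  simp only [TensorProduct.rid_tmul, one_smul] at h
  exact h

lemma repr_sum_counit_left {a : H} {ι : Type} (r : Coalgebra.Repr ℂ a ι) :
    ∑ i ∈ r.index, ε (r.left i) • r.right i = a := by
  have h := congrArg (TensorProduct.lid ℂ H) (Coalgebra.sum_counit_tmul_eq r)
  rw [map_sum] at h
  simp only [TensorProduct.lid_tmul, one_smul] at h
  exact h

/-- The counit is invariant under the antipode. -/
lemma counit_antipode' (x : H) : ε (S x) = ε x := by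
  classical
  set r := Coalgebra.Repr.arbitrary ℂ x with hr
  have h1 : ε (S x) = ∑ i ∈ r.index, ε (r.right i) * ε (S (r.left i)) := by
    conv_lhs => rw [← repr_sum_counit_right r, map_sum, map_sum]
    refine Finset.sum_congr rfl fun i _ => ?_
    rw [map_smul, map_smul, smul_eq_mul]
  have h2 : ∑ i ∈ r.index, ε (S (r.left i)) * ε (r.right i) = ε x := by
    have h3 := congrArg (⇑(ε : H →ₗ[ℂ] ℂ)) (HopfAlgebra.sum_antipode_mul_eq_algebraMap_counit (R := ℂ) r)
    rw [map_sum] at h3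
    simp only [Bialgebra.counit_mul, Bialgebra.counit_algebraMap] at h3
    exact h3
  rw [h1, ← h2]
  exact Finset.sum_congr rfl fun i _ => mul_comm _ _

section Convolution

variable {C : Type} [Ring C] [Algebra ℂ C]

/-- Convolution product of linear maps `H →ₗ C`. -/
def conv (f g : H →ₗ[ℂ] C) : H →ₗ[ℂ] C :=
  LinearMap.mul' ℂ C ∘ₗ TensorProduct.map f g ∘ₗ Δ

lemma conv_repr (f g : H →ₗ[ℂ] C) {x : H} {ι : Type} (r : Coalgebra.Repr ℂ x ι) :
    conv f g x = ∑ i ∈ r.index, f (r.left i) * g (r.right i) := by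
  simp only [conv, LinearMap.comp_apply]
  rw [← r.eq, map_sum, map_sum]
  simp

/-- The unit of the convolution algebra. -/
def convOne : H →ₗ[ℂ] C := Algebra.linearMap ℂ C ∘ₗ ε

lemma conv_one_right (f : H →ₗ[ℂ] C) : conv f convOne = f := by
  apply LinearMap.ext; intro x
  set r := Coalgebra.Repr.arbitrary ℂ x with hr
  rw [conv_repr f convOne r]
  have e : ∀ i ∈ r.index, f (r.left i) * convOne (r.right i) = f (ε (r.right i) • r.left i) := by
    intro i _
    rw [map_smul, Algebra.smul_def]
    exact (Algebra.commutes _ _).symm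
  rw [Finset.sum_congr rfl e, ← map_sum, repr_sum_counit_right]

lemma conv_one_left (f : H →ₗ[ℂ] C) : conv convOne f = f := by
  apply LinearMap.ext; intro x
  set r := Coalgebra.Repr.arbitrary ℂ x with hr
  rw [conv_repr convOne f r]
  have e : ∀ i ∈ r.index, convOne (r.left i) * f (r.right i) = f (ε (r.left i) • r.right i) := by
    intro i _
    rw [map_smul, Algebra.smul_def]
    rfl
  rw [Finset.sum_congr rfl e, ← map_sum, repr_sum_counit_left]

lemma conv_assoc (f g k : H →ₗ[ℂ] C) : conv (conv f g) k = conv f (conv g k) := by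
  apply LinearMap.ext; intro x
  set r := Coalgebra.Repr.arbitrary ℂ x with hr
  set rl : ∀ i : r.ι, Coalgebra.Repr ℂ (r.left i) (H × H) :=
    fun i => Coalgebra.Repr.arbitrary ℂ _ with hrl
  set rr : ∀ i : r.ι, Coalgebra.Repr ℂ (r.right i) (H × H) :=
    fun i => Coalgebra.Repr.arbitrary ℂ _ with hrr
  have key := congrArg
      (⇑(LinearMap.mul' ℂ C ∘ₗ TensorProduct.map f (LinearMap.mul' ℂ C ∘ₗ TensorProduct.map g k)))
      (Coalgebra.sum_tmul_tmul_eq r rl rr)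
  simp only [map_sum, LinearMap.comp_apply, map_tmul, LinearMap.mul'_apply] at key
  rw [conv_repr (conv f g) k r, conv_repr f (conv g k) r]
  calc ∑ i ∈ r.index, conv f g (r.left i) * k (r.right i)
      = ∑ i ∈ r.index, ∑ j ∈ (rl i).index,
          f ((rl i).left j) * (g ((rl i).right j) * k (r.right i)) := by
        refine Finset.sum_congr rfl fun i _ => ?_
        rw [conv_repr f g (rl i), Finset.sum_mul]
        exact Finset.sum_congr rfl fun j _ => mul_assoc _ _ _
    _ = ∑ i ∈ r.index, ∑ j ∈ (rr i).index,
          f (r.left i) * (g ((rr i).left j) * k ((rr i).right j)) := key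
    _ = ∑ i ∈ r.index, f (r.left i) * conv g k (r.right i) := by
        refine Finset.sum_congr rfl fun i _ => ?_
        rw [conv_repr g k (rr i), Finset.mul_sum]

end Convolution

/-- `antimul (u ⊗ v) = S u * v`. -/
def antimul : H ⊗[ℂ] H →ₗ[ℂ] H := LinearMap.mul' ℂ H ∘ₗ LinearMap.rTensor H (S : H →ₗ[ℂ] H)

lemma antimul_comul : (antimul : H ⊗[ℂ] H →ₗ[ℂ] H) ∘ₗ Δ = Algebra.linearMap ℂ H ∘ₗ ε := by
  apply LinearMap.ext; intro w
  simpa [antimul] using HopfAlgebra.mul_antipode_rTensor_comul_apply (R := ℂ) w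

@[simp] lemma antimul_tmul (u v : H) : antimul (u ⊗ₜ[ℂ] v) = S u * v := rfl

/-- `psi0 (x ⊗ (y ⊗ z)) = (S x * y) ⊗ z`. -/
def psi0 : H ⊗[ℂ] (H ⊗[ℂ] H) →ₗ[ℂ] H ⊗[ℂ] H :=
  LinearMap.rTensor H antimul ∘ₗ (TensorProduct.assoc ℂ H H H).symm.toLinearMap

@[simp] lemma psi0_tmul (x y z : H) : psi0 (x ⊗ₜ[ℂ] (y ⊗ₜ[ℂ] z)) = (S x * y) ⊗ₜ[ℂ] z := by
  simp [psi0]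

/-- Left antipode cancellation inside `Δ2`. -/
lemma psi0_comul2 : (psi0 : H ⊗[ℂ] (H ⊗[ℂ] H) →ₗ[ℂ] H ⊗[ℂ] H) ∘ₗ Δ2
    = (TensorProduct.mk ℂ H H) 1 := by
  apply LinearMap.ext; intro w
  have h0 : Δ2 w = LinearMap.lTensor H Δ (Δ w) := rfl
  simp only [LinearMap.comp_apply, h0, psi0, LinearEquiv.coe_coe]
  rw [Coalgebra.coassoc_symm_apply, ← LinearMap.rTensor_comp_apply, antimul_comul,
    LinearMap.rTensor_comp_apply, Coalgebra.rTensor_counit_comul]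
  simp

lemma nat1 :
    LinearMap.lTensor (H ⊗[ℂ] H) (Δ : H →ₗ[ℂ] H ⊗[ℂ] H)
        ∘ₗ (TensorProduct.assoc ℂ H H H).symm.toLinearMap
      = (TensorProduct.assoc ℂ H H (H ⊗[ℂ] H)).symm.toLinearMap
        ∘ₗ LinearMap.lTensor H (LinearMap.lTensor H Δ) := by
  ext x y z
  simp

/-- Reassociation of the double comultiplication: `(Δ ⊗ Δ) ∘ Δ = assoc⁻¹ ∘ Δ3`. -/
lemma mapΔΔ_comul (h : H) :
    TensorProduct.map Δ Δ (Δ h)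
      = (TensorProduct.assoc ℂ H H (H ⊗[ℂ] H)).symm (Δ3 h) := by
  have e1 : TensorProduct.map Δ Δ (Δ h)
      = LinearMap.lTensor (H ⊗[ℂ] H) Δ (LinearMap.rTensor H Δ (Δ h)) := by
    rw [← LinearMap.lTensor_comp_rTensor, LinearMap.comp_apply]
  have e2 : LinearMap.rTensor H (Δ : H →ₗ[ℂ] H ⊗[ℂ] H) (Δ h)
      = (TensorProduct.assoc ℂ H H H).symm (Δ2 h) :=
    (Coalgebra.coassoc_symm_apply h).symm
  rw [e1, e2]
  have e3 := LinearMap.congr_fun (nat1 (H := H)) (Δ2 h)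
  simp only [LinearMap.comp_apply, LinearEquiv.coe_coe] at e3
  rw [e3]
  congr 1
  have h4 : Δ2 h = LinearMap.lTensor H Δ (Δ h) := rfl
  rw [h4, ← LinearMap.lTensor_comp_apply]
  rfl

/-- `mapSS` is `S ⊗ S`. -/
def mapSS : H ⊗[ℂ] H →ₗ[ℂ] H ⊗[ℂ] H := TensorProduct.map (S : H →ₗ[ℂ] H) S

/-- the flip of the two tensor factors, as a linear map. -/
def commL : H ⊗[ℂ] H →ₗ[ℂ] H ⊗[ℂ] H := (TensorProduct.comm ℂ H H).toLinearMap

@[simp] lemma mapSS_tmul (u v : H) : mapSS (u ⊗ₜ[ℂ] v) = S u ⊗ₜ[ℂ] S v := rfl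
@[simp] lemma commL_tmul (u v : H) : commL (u ⊗ₜ[ℂ] v) = v ⊗ₜ[ℂ] u := rfl

/-- The candidate for `Δ ∘ S`. -/
def Gmap : H →ₗ[ℂ] H ⊗[ℂ] H := mapSS ∘ₗ commL ∘ₗ Δ

/-- `Zmap (x ⊗ (u ⊗ w)) = u ⊗ (S x * w)`. -/
def Zmap : H ⊗[ℂ] (H ⊗[ℂ] H) →ₗ[ℂ] H ⊗[ℂ] H :=
  LinearMap.lTensor H antimul
    ∘ₗ (TensorProduct.assoc ℂ H H H).toLinearMap
    ∘ₗ LinearMap.rTensor H commL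
    ∘ₗ (TensorProduct.assoc ℂ H H H).symm.toLinearMap

@[simp] lemma Zmap_tmul (x u w : H) : Zmap (x ⊗ₜ[ℂ] (u ⊗ₜ[ℂ] w)) = u ⊗ₜ[ℂ] (S x * w) := by
  simp [Zmap]

lemma conv_comul_comulS :
    conv Δ ((Δ : H →ₗ[ℂ] H ⊗[ℂ] H) ∘ₗ (S : H →ₗ[ℂ] H)) = (convOne : H →ₗ[ℂ] H ⊗[ℂ] H) := by
  apply LinearMap.ext; intro x
  set r := Coalgebra.Repr.arbitrary ℂ x with hr
  rw [conv_repr _ _ r]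
  have e : ∀ i ∈ r.index,
      Δ (r.left i) * ((Δ : H →ₗ[ℂ] H ⊗[ℂ] H) ∘ₗ (S : H →ₗ[ℂ] H)) (r.right i)
        = Δ (r.left i * S (r.right i)) := by
    intro i _
    simp [Bialgebra.comul_mul]
  rw [Finset.sum_congr rfl e,
    ← map_sum (Δ : H →ₗ[ℂ] H ⊗[ℂ] H) (fun i => r.left i * S (r.right i)) r.index,
    HopfAlgebra.sum_mul_antipode_eq_algebraMap_counit, Bialgebra.comul_algebraMap]
  simp [convOne]

lemma N3 :
    (LinearMap.mul' ℂ (H ⊗[ℂ] H))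
        ∘ₗ TensorProduct.map (mapSS ∘ₗ commL) (LinearMap.id (R := ℂ) (M := H ⊗[ℂ] H))
        ∘ₗ (TensorProduct.assoc ℂ H H (H ⊗[ℂ] H)).symm.toLinearMap
      = Zmap ∘ₗ LinearMap.lTensor H psi0 := by
  ext x y z w
  simp [Algebra.TensorProduct.tmul_mul_tmul]

lemma N4 :
    Zmap ∘ₗ LinearMap.lTensor H ((TensorProduct.mk ℂ H H) 1)
      = (TensorProduct.mk ℂ H H) 1 ∘ₗ antimul := by
  ext x w
  simp

lemma conv_G_comul :
    conv Gmap (Δ : H →ₗ[ℂ] H ⊗[ℂ] H) = (convOne : H →ₗ[ℂ] H ⊗[ℂ] H) := by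
  apply LinearMap.ext; intro x
  have hmm : ∀ t : H ⊗[ℂ] H, TensorProduct.map Gmap Δ t
      = TensorProduct.map (mapSS ∘ₗ commL) (LinearMap.id (R := ℂ) (M := H ⊗[ℂ] H))
          (TensorProduct.map Δ Δ t) := by
    intro t
    induction t using TensorProduct.induction_on with
    | zero => simp
    | tmul u v => simp [Gmap]
    | add t t' ht ht' => simp only [map_add, ht, ht']
  have e0 : conv Gmap (Δ : H →ₗ[ℂ] H ⊗[ℂ] H) x
      = LinearMap.mul' ℂ (H ⊗[ℂ] H)
          (TensorProduct.map (mapSS ∘ₗ commL) (LinearMap.id (R := ℂ) (M := H ⊗[ℂ] H))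
            (TensorProduct.map Δ Δ (Δ x))) := by
    simp only [conv, LinearMap.comp_apply, hmm]
  rw [e0, mapΔΔ_comul]
  have e1 := LinearMap.congr_fun (N3 (H := H)) (Δ3 x)
  simp only [LinearMap.comp_apply, LinearEquiv.coe_coe] at e1
  rw [e1]
  have e2 : LinearMap.lTensor H psi0 (Δ3 x)
      = LinearMap.lTensor H ((TensorProduct.mk ℂ H H) 1) (Δ x) := by
    have h3 : Δ3 x = LinearMap.lTensor H Δ2 (Δ x) := rfl
    rw [h3, ← LinearMap.lTensor_comp_apply, psi0_comul2]
  rw [e2]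
  have e3 := LinearMap.congr_fun (N4 (H := H)) (Δ x)
  simp only [LinearMap.comp_apply] at e3
  rw [e3]
  have e4 := LinearMap.congr_fun (antimul_comul (H := H)) x
  simp only [LinearMap.comp_apply] at e4
  rw [e4]
  simp [convOne, Algebra.linearMap_apply, Algebra.algebraMap_eq_smul_one,
    Algebra.TensorProduct.one_def]

/-- The antipode is an anti-coalgebra morphism: `Δ ∘ S = (S ⊗ S) ∘ flip ∘ Δ`. -/
lemma comul_antipode_map :
    (Δ : H →ₗ[ℂ] H ⊗[ℂ] H) ∘ₗ (S : H →ₗ[ℂ] H) = mapSS ∘ₗ commL ∘ₗ Δ := by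
  have h1 := conv_one_right (Gmap (H := H))
  rw [← conv_comul_comulS, ← conv_assoc, conv_G_comul, conv_one_left] at h1
  simpa [Gmap] using h1

lemma comul_antipode_apply (v : H) : Δ (S v) = mapSS (commL (Δ v)) := by
  have := LinearMap.congr_fun (comul_antipode_map (H := H)) v
  simpa [LinearMap.comp_apply] using this

/-- Sandwich map for a general algebra. -/
def sandwichAlg {A : Type} [Ring A] [Algebra ℂ A] : A ⊗[ℂ] A →ₗ[ℂ] A →ₗ[ℂ] A :=
  TensorProduct.lift <| LinearMap.mk₂ ℂ
    (fun u v => (LinearMap.mulRight ℂ v) ∘ₗ (LinearMap.mulLeft ℂ u))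
    (fun u u' v => LinearMap.ext fun x => by simp [add_mul])
    (fun c u v => LinearMap.ext fun x => by simp [smul_mul_assoc])
    (fun u v v' => LinearMap.ext fun x => by simp [mul_add])
    (fun c u v => LinearMap.ext fun x => by simp [mul_smul_comm])

@[simp] lemma sandwichAlg_tmul {A : Type} [Ring A] [Algebra ℂ A] (u v x : A) :
    sandwichAlg (u ⊗ₜ[ℂ] v) x = u * x * v := rfl

/-- Comultiplication of a sandwich. -/
lemma comul_sandwich (t : H ⊗[ℂ] H) (x : H) :
    Δ (sandwich t x) = sandwichAlg (TensorProduct.map Δ Δ t) (Δ x) := by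
  induction t using TensorProduct.induction_on with
  | zero => simp
  | tmul u v => simp [Bialgebra.comul_mul]
  | add t t' ht ht' =>
      simp only [map_add, LinearMap.add_apply, ht, ht']

/-- `XiMap (n1 ⊗ (n2 ⊗ (n3 ⊗ n4))) = (n1 ⊗ n2) ⊗ (S n4 ⊗ S n3)`. -/
def XiMap : H ⊗[ℂ] (H ⊗[ℂ] (H ⊗[ℂ] H)) →ₗ[ℂ] (H ⊗[ℂ] H) ⊗[ℂ] (H ⊗[ℂ] H) :=
  LinearMap.lTensor (H ⊗[ℂ] H) (mapSS ∘ₗ commL)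
    ∘ₗ (TensorProduct.assoc ℂ H H (H ⊗[ℂ] H)).symm.toLinearMap

/-- `GammaMap ((a1 ⊗ a2) ⊗ n) = ((a1 ⊗ a2) * (n1 ⊗ n2)) ⊗ (S n4 ⊗ S n3)`. -/
def GammaMap :
    (H ⊗[ℂ] H) ⊗[ℂ] (H ⊗[ℂ] (H ⊗[ℂ] (H ⊗[ℂ] H))) →ₗ[ℂ] (H ⊗[ℂ] H) ⊗[ℂ] (H ⊗[ℂ] H) :=
  LinearMap.rTensor (H ⊗[ℂ] H) (LinearMap.mul' ℂ (H ⊗[ℂ] H))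
    ∘ₗ (TensorProduct.assoc ℂ (H ⊗[ℂ] H) (H ⊗[ℂ] H) (H ⊗[ℂ] H)).symm.toLinearMap
    ∘ₗ LinearMap.lTensor (H ⊗[ℂ] H) XiMap

/-- The master operator: `Fmap ((u ⊗ n) ⊗ w) = sandwichAlg (GammaMap (u ⊗ n)) w`. -/
def Fmap :
    ((H ⊗[ℂ] H) ⊗[ℂ] (H ⊗[ℂ] (H ⊗[ℂ] (H ⊗[ℂ] H)))) ⊗[ℂ] (H ⊗[ℂ] H) →ₗ[ℂ] H ⊗[ℂ] H :=
  TensorProduct.lift (sandwichAlg (A := H ⊗[ℂ] H)) ∘ₗ LinearMap.rTensor (H ⊗[ℂ] H) GammaMap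

@[simp] lemma Fmap_tmul (p : (H ⊗[ℂ] H) ⊗[ℂ] (H ⊗[ℂ] (H ⊗[ℂ] (H ⊗[ℂ] H))))
    (w : H ⊗[ℂ] H) : Fmap (p ⊗ₜ[ℂ] w) = sandwichAlg (GammaMap p) w := by
  simp [Fmap]

lemma K3M (u : H ⊗[ℂ] H) :
    TensorProduct.map (LinearMap.mulLeft ℂ u) (mapSS ∘ₗ commL)
        ∘ₗ (TensorProduct.assoc ℂ H H (H ⊗[ℂ] H)).symm.toLinearMap
      = GammaMap ∘ₗ (TensorProduct.mk ℂ (H ⊗[ℂ] H) (H ⊗[ℂ] (H ⊗[ℂ] (H ⊗[ℂ] H)))) u := by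
  ext n1 n2 n3 n4
  simp [GammaMap, XiMap]

/-- The key structural formula for `Δ` of the sandwich action. -/
lemma key_formula (a h x : H) :
    Δ (sandwich ((TensorProduct.map (LinearMap.mulLeft ℂ a) S) (Δ h)) x)
      = Fmap ((Δ a ⊗ₜ[ℂ] Δ3 h) ⊗ₜ[ℂ] Δ x) := by
  rw [comul_sandwich, Fmap_tmul]
  have K2a : ∀ t : H ⊗[ℂ] H,
      TensorProduct.map Δ Δ ((TensorProduct.map (LinearMap.mulLeft ℂ a) S) t)
        = TensorProduct.map (LinearMap.mulLeft ℂ (Δ a)) (mapSS ∘ₗ commL)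
            (TensorProduct.map Δ Δ t) := by
    intro t
    induction t using TensorProduct.induction_on with
    | zero => simp
    | tmul u v => simp [Bialgebra.comul_mul, comul_antipode_apply]
    | add t t' ht ht' => simp only [map_add, ht, ht']
  have harg := LinearMap.congr_fun (K3M (H := H) (Δ a)) (Δ3 h)
  simp only [LinearMap.comp_apply, LinearEquiv.coe_coe, TensorProduct.mk_apply] at harg
  rw [K2a, mapΔΔ_comul, harg]

/-- `M1` multiplies the first two tensor legs. -/
def M1 : H ⊗[ℂ] (H ⊗[ℂ] (H ⊗[ℂ] (H ⊗[ℂ] H))) →ₗ[ℂ] H ⊗[ℂ] (H ⊗[ℂ] (H ⊗[ℂ] H)) :=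
  LinearMap.rTensor (H ⊗[ℂ] (H ⊗[ℂ] H)) (LinearMap.mul' ℂ H)
    ∘ₗ (TensorProduct.assoc ℂ H H (H ⊗[ℂ] (H ⊗[ℂ] H))).symm.toLinearMap

def step1 : H ⊗[ℂ] (H ⊗[ℂ] H) →ₗ[ℂ] (H ⊗[ℂ] H) ⊗[ℂ] (H ⊗[ℂ] (H ⊗[ℂ] H)) :=
  TensorProduct.map Δ (LinearMap.lTensor H Δ)

def step2 :
    (H ⊗[ℂ] H) ⊗[ℂ] (H ⊗[ℂ] (H ⊗[ℂ] H)) →ₗ[ℂ] (H ⊗[ℂ] H) ⊗[ℂ] (H ⊗[ℂ] (H ⊗[ℂ] H)) :=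
  LinearMap.lTensor (H ⊗[ℂ] H) (TensorProduct.assoc ℂ H H H).toLinearMap
    ∘ₗ LinearMap.lTensor (H ⊗[ℂ] H) (TensorProduct.comm ℂ H (H ⊗[ℂ] H)).toLinearMap
    ∘ₗ (TensorProduct.assoc ℂ (H ⊗[ℂ] H) H (H ⊗[ℂ] H)).toLinearMap
    ∘ₗ (TensorProduct.comm ℂ (H ⊗[ℂ] H) ((H ⊗[ℂ] H) ⊗[ℂ] H)).toLinearMap
    ∘ₗ LinearMap.lTensor (H ⊗[ℂ] H) (TensorProduct.assoc ℂ H H H).symm.toLinearMap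

def step3 :
    (H ⊗[ℂ] H) ⊗[ℂ] (H ⊗[ℂ] (H ⊗[ℂ] H)) →ₗ[ℂ] H ⊗[ℂ] (H ⊗[ℂ] (H ⊗[ℂ] H)) :=
  LinearMap.rTensor (H ⊗[ℂ] (H ⊗[ℂ] H)) antimul

def Rp : H ⊗[ℂ] (H ⊗[ℂ] H) →ₗ[ℂ] H ⊗[ℂ] (H ⊗[ℂ] (H ⊗[ℂ] H)) := step3 ∘ₗ step2 ∘ₗ step1

/-- The twisting operator of the coproduct of `M(H)`. -/
def Qmap : H ⊗[ℂ] (H ⊗[ℂ] (H ⊗[ℂ] H)) →ₗ[ℂ] H ⊗[ℂ] (H ⊗[ℂ] (H ⊗[ℂ] H)) :=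
  M1 ∘ₗ LinearMap.lTensor H Rp

/-- `tau ((p ⊗ q) ⊗ (e ⊗ g)) = e ⊗ (p ⊗ (q ⊗ g))`. -/
def tau : (H ⊗[ℂ] H) ⊗[ℂ] (H ⊗[ℂ] H) →ₗ[ℂ] H ⊗[ℂ] (H ⊗[ℂ] (H ⊗[ℂ] H)) :=
  LinearMap.lTensor H (TensorProduct.assoc ℂ H H H).toLinearMap
    ∘ₗ LinearMap.lTensor H (TensorProduct.comm ℂ H (H ⊗[ℂ] H)).toLinearMap
    ∘ₗ (TensorProduct.assoc ℂ H H (H ⊗[ℂ] H)).toLinearMap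
    ∘ₗ (TensorProduct.comm ℂ (H ⊗[ℂ] H) (H ⊗[ℂ] H)).toLinearMap

lemma N1' : (step3 ∘ₗ step2 : (H ⊗[ℂ] H) ⊗[ℂ] (H ⊗[ℂ] (H ⊗[ℂ] H)) →ₗ[ℂ] _)
    = tau ∘ₗ LinearMap.lTensor (H ⊗[ℂ] H) psi0 := by
  ext p q y z w
  simp [step2, step3, tau]

lemma N5 : (tau ∘ₗ LinearMap.lTensor (H ⊗[ℂ] H) ((TensorProduct.mk ℂ H H) 1)
      ∘ₗ (TensorProduct.assoc ℂ H H H).symm.toLinearMap :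
        H ⊗[ℂ] (H ⊗[ℂ] H) →ₗ[ℂ] H ⊗[ℂ] (H ⊗[ℂ] (H ⊗[ℂ] H)))
    = (TensorProduct.mk ℂ H (H ⊗[ℂ] (H ⊗[ℂ] H))) 1 := by
  ext x y z
  simp [tau]

lemma N6 : (M1 ∘ₗ LinearMap.lTensor H ((TensorProduct.mk ℂ H (H ⊗[ℂ] (H ⊗[ℂ] H))) 1) :
      H ⊗[ℂ] (H ⊗[ℂ] (H ⊗[ℂ] H)) →ₗ[ℂ] H ⊗[ℂ] (H ⊗[ℂ] (H ⊗[ℂ] H)))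
    = LinearMap.id := by
  ext x y z w
  simp [M1]

lemma Rp_comul2 (g : H) : Rp (Δ2 g) = 1 ⊗ₜ[ℂ] Δ2 g := by
  have e1 : step1 (Δ2 g)
      = LinearMap.rTensor (H ⊗[ℂ] (H ⊗[ℂ] H)) Δ (Δ3 g) := by
    have h0 : Δ2 g = LinearMap.lTensor H Δ (Δ g) := rfl
    rw [step1, h0, ← LinearMap.rTensor_comp_lTensor, LinearMap.comp_apply,
      ← LinearMap.lTensor_comp_apply]
    rfl
  have e2 : LinearMap.rTensor (H ⊗[ℂ] (H ⊗[ℂ] H)) Δ (Δ3 g)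
      = LinearMap.lTensor (H ⊗[ℂ] H) Δ2
          ((TensorProduct.assoc ℂ H H H).symm (Δ2 g)) := by
    have h1 : Δ3 g = LinearMap.lTensor H Δ2 (Δ g) := rfl
    calc LinearMap.rTensor (H ⊗[ℂ] (H ⊗[ℂ] H)) Δ (Δ3 g)
        = ((Δ : H →ₗ[ℂ] H ⊗[ℂ] H).rTensor (H ⊗[ℂ] (H ⊗[ℂ] H))
            ∘ₗ (Δ2 : H →ₗ[ℂ] H ⊗[ℂ] (H ⊗[ℂ] H)).lTensor H) (Δ g) := by
          rw [h1]; rfl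
      _ = TensorProduct.map Δ Δ2 (Δ g) := by rw [LinearMap.rTensor_comp_lTensor]
      _ = ((Δ2 : H →ₗ[ℂ] H ⊗[ℂ] (H ⊗[ℂ] H)).lTensor (H ⊗[ℂ] H)
            ∘ₗ (Δ : H →ₗ[ℂ] H ⊗[ℂ] H).rTensor H) (Δ g) := by
          rw [LinearMap.lTensor_comp_rTensor]
      _ = LinearMap.lTensor (H ⊗[ℂ] H) Δ2 (LinearMap.rTensor H Δ (Δ g)) := rfl
      _ = LinearMap.lTensor (H ⊗[ℂ] H) Δ2
            ((TensorProduct.assoc ℂ H H H).symm (Δ2 g)) := by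
          rw [← Coalgebra.coassoc_symm_apply]
          rfl
  have e3 := LinearMap.congr_fun (N1' (H := H))
      (LinearMap.lTensor (H ⊗[ℂ] H) Δ2 ((TensorProduct.assoc ℂ H H H).symm (Δ2 g)))
  simp only [LinearMap.comp_apply] at e3
  have e4 : LinearMap.lTensor (H ⊗[ℂ] H) psi0
        (LinearMap.lTensor (H ⊗[ℂ] H) Δ2 ((TensorProduct.assoc ℂ H H H).symm (Δ2 g)))
      = LinearMap.lTensor (H ⊗[ℂ] H) ((TensorProduct.mk ℂ H H) 1)
          ((TensorProduct.assoc ℂ H H H).symm (Δ2 g)) := by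
    rw [← LinearMap.lTensor_comp_apply, psi0_comul2]
  have e5 := LinearMap.congr_fun (N5 (H := H)) (Δ2 g)
  simp only [LinearMap.comp_apply, LinearEquiv.coe_coe, TensorProduct.mk_apply] at e5
  calc Rp (Δ2 g) = step3 (step2 (step1 (Δ2 g))) := rfl
    _ = step3 (step2 (LinearMap.lTensor (H ⊗[ℂ] H) Δ2
          ((TensorProduct.assoc ℂ H H H).symm (Δ2 g)))) := by rw [e1, e2]
    _ = tau (LinearMap.lTensor (H ⊗[ℂ] H) ((TensorProduct.mk ℂ H H) 1)
          ((TensorProduct.assoc ℂ H H H).symm (Δ2 g))) := by rw [e3, e4]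
    _ = 1 ⊗ₜ[ℂ] Δ2 g := e5

/-- The crucial Hopf-algebraic identity: `Q ∘ Δ3 = Δ3`. -/
lemma Q_comul3 (h : H) : Qmap (Δ3 h) = Δ3 h := by
  have h0 : Δ3 h = LinearMap.lTensor H Δ2 (Δ h) := rfl
  have e1 : LinearMap.lTensor H Rp (Δ3 h)
      = LinearMap.lTensor H ((TensorProduct.mk ℂ H (H ⊗[ℂ] (H ⊗[ℂ] H))) 1
          ∘ₗ Δ2) (Δ h) := by
    rw [h0, ← LinearMap.lTensor_comp_apply]
    have hR : Rp ∘ₗ (Δ2 : H →ₗ[ℂ] H ⊗[ℂ] (H ⊗[ℂ] H))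
        = (TensorProduct.mk ℂ H (H ⊗[ℂ] (H ⊗[ℂ] H))) 1 ∘ₗ Δ2 := by
      apply LinearMap.ext; intro g
      simpa only [LinearMap.comp_apply, TensorProduct.mk_apply] using Rp_comul2 g
    rw [hR]
  have e2 : Qmap (Δ3 h)
      = M1 (LinearMap.lTensor H ((TensorProduct.mk ℂ H (H ⊗[ℂ] (H ⊗[ℂ] H))) 1)
          (LinearMap.lTensor H Δ2 (Δ h))) := by
    rw [Qmap, LinearMap.comp_apply, e1, LinearMap.lTensor_comp, LinearMap.comp_apply]
  rw [e2, ← h0]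
  exact LinearMap.congr_fun (N6 (H := H)) (Δ3 h)

/-- Pure-tensor evaluation of `Fmap` after the `Q`-twist. -/
lemma G2 (a1 a2 n1 n3 : H) (s u w : H ⊗[ℂ] H) :
    Fmap (((a1 ⊗ₜ[ℂ] a2) ⊗ₜ[ℂ]
        (M1 (n1 ⊗ₜ[ℂ] (step3 (step2 (s ⊗ₜ[ℂ] (n3 ⊗ₜ[ℂ] u))))))) ⊗ₜ[ℂ] w)
      = TensorProduct.map
          (sandwich ((TensorProduct.map (LinearMap.mulLeft ℂ (a1 * n1 * S n3)) S) u))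
          (sandwich ((TensorProduct.map (LinearMap.mulLeft ℂ a2) S) s)) w := by
  induction s using TensorProduct.induction_on with
  | zero =>
      simp only [TensorProduct.zero_tmul, LinearMap.map_zero, TensorProduct.tmul_zero,
        TensorProduct.map_zero_right, LinearMap.zero_apply]
  | tmul p q =>
      induction u using TensorProduct.induction_on with
      | zero =>
          simp only [TensorProduct.tmul_zero, LinearMap.map_zero, TensorProduct.zero_tmul,
            TensorProduct.map_zero_left, LinearMap.zero_apply]
      | tmul e f' =>
          induction w using TensorProduct.induction_on with
          | zero => simp only [TensorProduct.tmul_zero, LinearMap.map_zero]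
          | tmul y z =>
              simp [step2, step3, M1, GammaMap, XiMap,
                Algebra.TensorProduct.tmul_mul_tmul, mul_assoc]
          | add w1 w2 hw1 hw2 =>
              simp only [TensorProduct.tmul_add, map_add, hw1, hw2]
      | add u1 u2 hu1 hu2 =>
          simp only [TensorProduct.tmul_add, TensorProduct.add_tmul, map_add,
            TensorProduct.map_add_left, LinearMap.add_apply, hu1, hu2]
  | add s1 s2 hs1 hs2 =>
      simp only [TensorProduct.tmul_add, TensorProduct.add_tmul, map_add,
        TensorProduct.map_add_right, LinearMap.add_apply, hs1, hs2]

/-- Evaluation of `Fmap` on a pure tensor twisted by `Qmap`. -/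
lemma FQ (a1 a2 n1 n2 n3 n4 : H) (w : H ⊗[ℂ] H) :
    Fmap (((a1 ⊗ₜ[ℂ] a2) ⊗ₜ[ℂ] Qmap (n1 ⊗ₜ[ℂ] (n2 ⊗ₜ[ℂ] (n3 ⊗ₜ[ℂ] n4)))) ⊗ₜ[ℂ] w)
      = TensorProduct.map
          (sandwich ((TensorProduct.map (LinearMap.mulLeft ℂ (a1 * n1 * S n3)) S) (Δ n4)))
          (sandwich ((TensorProduct.map (LinearMap.mulLeft ℂ a2) S) (Δ n2))) w := by
  have hQ : Qmap (n1 ⊗ₜ[ℂ] (n2 ⊗ₜ[ℂ] (n3 ⊗ₜ[ℂ] n4)))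
      = M1 (n1 ⊗ₜ[ℂ] (step3 (step2 (Δ n2 ⊗ₜ[ℂ] (n3 ⊗ₜ[ℂ] Δ n4))))) := by
    simp [Qmap, Rp, step1]
  rw [hQ]
  exact G2 a1 a2 n1 n3 (Δ n2) (Δ n4) w

/-- Transport of `dualMap`s through a tensor-square. -/
lemma map_dualMap (f g : H →ₗ[ℂ] H) (χ ξ : Module.Dual ℂ H) (w : H ⊗[ℂ] H) :
    TensorProduct.map (f.dualMap χ) (g.dualMap ξ) w
      = TensorProduct.map χ ξ (TensorProduct.map f g w) := by
  induction w using TensorProduct.induction_on with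
  | zero => simp
  | tmul y z => simp
  | add w1 w2 h1 h2 => simp only [map_add, h1, h2]

end Statement11Aux

/-- (Covariance / module-algebra property.)  The right action `◁`
makes `H^{*op}` a right `M(H)`-module algebra: for all `φ, ψ ∈ H*`, `x = a⊗h ∈ M(H)`,
`(φ ∗op ψ) ◁ x = Σ (φ ◁ x₁) ∗op (ψ ◁ x₂)` where
`Δ_M(a⊗h) = Σ (a₂ ⊗ h₂) ⊗ (a₁ h₁ S(h₃) ⊗ h₄)` (here expressed through Sweedler
representations `Δ a = Σ a₁ ⊗ a₂` and `Δ³ h = Σ h₁ ⊗ h₂ ⊗ h₃ ⊗ h₄`); moreover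
`1_{H*} ◁ (a⊗h) = ε_M(a⊗h) • 1_{H*}`, the unit `1_{H*}` of `H*` (and of `H^{*op}`)
being the counit `ε` of `H`. -/
theorem statement11 [FiniteDimensional ℂ H] (hS : ∀ x : H, S (S x) = x) :
    (∀ (φ ψ : Module.Dual ℂ H) (a h : H) (ι κ : Type) (s : Finset ι) (t : Finset κ)
        (a1 a2 : ι → H) (h1 h2 h3 h4 : κ → H),
      (∑ i ∈ s, a1 i ⊗ₜ[ℂ] a2 i) = Δ a →
      (∑ j ∈ t, h1 j ⊗ₜ[ℂ] (h2 j ⊗ₜ[ℂ] (h3 j ⊗ₜ[ℂ] h4 j))) = Δ3 h →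
      ract (dualMulOp φ ψ) a h =
        ∑ i ∈ s, ∑ j ∈ t,
          dualMulOp (ract φ (a2 i) (h2 j))
            (ract ψ (a1 i * h1 j * S (h3 j)) (h4 j))) ∧
    (∀ a h : H, ract (ε : Module.Dual ℂ H) a h = (ε a * ε h) • (ε : Module.Dual ℂ H)) := by
  constructor
  · intro φ ψ a h ι κ s t a1 a2 h1 h2 h3 h4 ha hh
    apply LinearMap.ext; intro x
    simp only [LinearMap.sum_apply]
    have lhs1 : ract (dualMulOp φ ψ) a h x
        = LinearMap.mul' ℂ ℂ (TensorProduct.map ψ φ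
            (Δ (sandwich ((TensorProduct.map (LinearMap.mulLeft ℂ a) S) (Δ h)) x))) := by
      simp [ract, dualMulOp, dualMul, LinearMap.dualMap_apply]
    rw [lhs1, key_formula a h x, ← Q_comul3 h, ← ha, ← hh]
    rw [map_sum (Qmap (H := H))]
    rw [TensorProduct.sum_tmul]
    simp only [TensorProduct.tmul_sum, TensorProduct.sum_tmul, map_sum]
    refine Finset.sum_congr rfl fun i _ => Finset.sum_congr rfl fun j _ => ?_
    rw [FQ]
    simp only [dualMulOp, dualMul, ract, LinearMap.comp_apply]
    rw [map_dualMap]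
  · intro a h
    apply LinearMap.ext; intro x
    have main : ∀ t : H ⊗[ℂ] H,
        ε (sandwich ((TensorProduct.map (LinearMap.mulLeft ℂ a) S) t) x)
          = ε a * ε x * (LinearMap.mul' ℂ ℂ ((TensorProduct.map ε ε) t)) := by
      intro t
      induction t using TensorProduct.induction_on with
      | zero => simp
      | tmul u v =>
          simp only [TensorProduct.map_tmul, sandwich_tmul, LinearMap.mulLeft_apply,
            Bialgebra.counit_mul, LinearMap.mul'_apply, counit_antipode']
          ring
      | add t t' ht ht' =>
          simp only [map_add, LinearMap.add_apply, ht, ht']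
          ring
    have lhs1 : ract (ε : Module.Dual ℂ H) a h x
        = ε (sandwich ((TensorProduct.map (LinearMap.mulLeft ℂ a) S) (Δ h)) x) := by
      simp [ract, LinearMap.dualMap_apply]
    rw [lhs1, main (Δ h)]
    have e : LinearMap.mul' ℂ ℂ ((TensorProduct.map ε ε) (Δ h)) = ε h := by
      rw [← LinearMap.lTensor_comp_rTensor (f := (ε : H →ₗ[ℂ] ℂ)) (g := (ε : H →ₗ[ℂ] ℂ)),
        LinearMap.comp_apply, Coalgebra.rTensor_counit_comul]
      simp
    rw [e]
    simp only [LinearMap.smul_apply, smul_eq_mul]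
    ring

end SemidualKitaev
end
end

section
/- The coproduct Δ_M(a⊗h) = (a₍₂₎ ⊗ h₍₂₎) ⊗ (a₍₁₎ h₍₁₎ S(h₍₃₎) ⊗ h₍₄₎) is an algebra homomorphism from M(H) to M(H) ⊗ M(H): Δ_M((a⊗h)·(b⊗g)) = Δ_M(a⊗h)·Δ_M(b⊗g) (product taken componentwise in M(H) ⊗ M(H)) and Δ_M(1⊗1) = (1⊗1) ⊗ (1⊗1); moreover ε_M is an algebra homomorphism. Hence (M(H), ·, Δ_M, ε_M) is a bialgebra. -/
/-!
Common setup for formalizing "Ribbon operators in the semidual lattice code model"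
(Soglohu–Osei–Osumanu).

`H` is a Hopf algebra over `ℂ`.  Its dual Hopf algebra `H*` is realised as
`Module.Dual ℂ H`, with evaluation pairing `⟨h, φ⟩ = φ h`.  The multiplication of
`H*` is dual to the comultiplication of `H` and the comultiplication of `H*` is
dual to the multiplication of `H`; consequently every edge operator below, given
in the paper by a Sweedler formula on `H*`, is pre-composition
(`LinearMap.dualMap`) with an explicit linear endomorphism of `H`.  For instance
`L^h₊(φ) = ⟨h, S(φ₍₁₎) φ₍₃₎⟩ φ₍₂₎` is exactly `(L^h₊ φ)(x) = Σ φ (S h₍₁₎ * x * h₍₂₎)`.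
Since the antipode is assumed involutive (`S⁻¹ = S`), occurrences of `S⁻¹` are
rendered as `S`.
-/

open TensorProduct

noncomputable section

namespace SemidualKitaev

variable {H : Type} [Ring H] [HopfAlgebra ℂ H]

section Aux

open LinearMap

lemma S_one : S (1 : H) = 1 := by
  have h := HopfAlgebra.mul_antipode_rTensor_comul_apply (R := ℂ) (A := H) 1
  simpa [Algebra.TensorProduct.one_def] using h

lemma counit_S (h : H) : ε (S h) = ε (h : H) := by
  have ax := congrArg (ε : H →ₗ[ℂ] ℂ) (HopfAlgebra.mul_antipode_rTensor_comul_apply (R := ℂ) (A := H) h)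
  have key : ∀ (f : H →ₗ[ℂ] H) (h : H),
      ε (LinearMap.mul' ℂ H (f.rTensor H (Δ h))) = ε (f h) := by
    intro f h
    have e1 : (ε : H →ₗ[ℂ] ℂ) ∘ₗ LinearMap.mul' ℂ H ∘ₗ f.rTensor H
        = LinearMap.mul' ℂ ℂ ∘ₗ (((ε : H →ₗ[ℂ] ℂ) ∘ₗ f).rTensor ℂ) ∘ₗ ((ε : H →ₗ[ℂ] ℂ).lTensor H) := by
      ext x y
      simp
    have := LinearMap.congr_fun e1 (Δ h)
    simp only [LinearMap.comp_apply] at this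
    rw [this, Coalgebra.lTensor_counit_comul]
    simp
  rw [key S h] at ax
  simpa using ax

/-- `θ : M(H) → H ⊗ H`, `a ⊗ h ↦ a h₁ ⊗ h₂`. -/
def th : H ⊗[ℂ] H →ₗ[ℂ] H ⊗[ℂ] H :=
  (LinearMap.mul' ℂ H).rTensor H ∘ₗ (TensorProduct.assoc ℂ H H H).symm.toLinearMap ∘ₗ
    (LinearMap.lTensor H Δ)

/-- `θ' : H ⊗ H → M(H)`, `c ⊗ k ↦ c S(k₁) ⊗ k₂`. -/
def th' : H ⊗[ℂ] H →ₗ[ℂ] H ⊗[ℂ] H :=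
  (LinearMap.mul' ℂ H).rTensor H ∘ₗ (TensorProduct.assoc ℂ H H H).symm.toLinearMap ∘ₗ
    (LinearMap.lTensor H ((S (H := H)).rTensor H ∘ₗ Δ))

lemma assoc_symm_tmul_eq (a : H) (t : H ⊗[ℂ] H) :
    (TensorProduct.assoc ℂ H H H).symm (a ⊗ₜ t) = (TensorProduct.mk ℂ H H a).rTensor H t :=
  LinearMap.congr_fun
    (show (TensorProduct.assoc ℂ H H H).symm.toLinearMap ∘ₗ TensorProduct.mk ℂ H (H ⊗[ℂ] H) a
        = (TensorProduct.mk ℂ H H a).rTensor H by ext x y; simp) t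

lemma mul'_rTensor_mk (a : H) (t : H ⊗[ℂ] H) :
    (LinearMap.mul' ℂ H).rTensor H ((TensorProduct.mk ℂ H H a).rTensor H t)
      = (LinearMap.mulLeft ℂ a).rTensor H t := by
  have e : LinearMap.mul' ℂ H ∘ₗ TensorProduct.mk ℂ H H a = LinearMap.mulLeft ℂ a := by
    ext x; simp
  rw [← LinearMap.rTensor_comp_apply, e]

lemma th_tmul (a h : H) : th (a ⊗ₜ[ℂ] h) = (LinearMap.mulLeft ℂ a).rTensor H (Δ h) := by
  simp only [th, LinearMap.comp_apply, LinearMap.lTensor_tmul, LinearEquiv.coe_coe,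
    assoc_symm_tmul_eq, mul'_rTensor_mk]

lemma th'_tmul (c k : H) :
    th' (c ⊗ₜ[ℂ] k) = (LinearMap.mulLeft ℂ c ∘ₗ S).rTensor H (Δ k) := by
  simp only [th', LinearMap.comp_apply, LinearMap.lTensor_tmul, LinearEquiv.coe_coe,
    LinearMap.rTensor_comp_apply, assoc_symm_tmul_eq, mul'_rTensor_mk]

lemma rTensor_mulLeft_eq (a : H) (t : H ⊗[ℂ] H) :
    (LinearMap.mulLeft ℂ a).rTensor H t = (a ⊗ₜ[ℂ] (1 : H)) * t := by
  induction t using TensorProduct.induction_on with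
  | zero => simp
  | tmul x y => simp [Algebra.TensorProduct.tmul_mul_tmul]
  | add u v hu hv => simp [mul_add, hu, hv]

lemma lTensor_mulRight_eq (g : H) (t : H ⊗[ℂ] H) :
    (LinearMap.mulRight ℂ g).lTensor H t = t * ((1 : H) ⊗ₜ[ℂ] g) := by
  induction t using TensorProduct.induction_on with
  | zero => simp
  | tmul x y => simp [Algebra.TensorProduct.tmul_mul_tmul]
  | add u v hu hv => simp [add_mul, hu, hv]

end Aux

section Aux2
set_option synthInstance.maxHeartbeats 400000
set_option maxHeartbeats 800000

open LinearMap

lemma plumb_mid (f : H →ₗ[ℂ] H) (u : (H ⊗[ℂ] H) ⊗[ℂ] H) :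
    (TensorProduct.assoc ℂ H H H).symm
        ((f.rTensor H).lTensor H ((TensorProduct.assoc ℂ H H H) u))
      = ((f.lTensor H).rTensor H) u := by
  induction u using TensorProduct.induction_on with
  | zero => simp
  | tmul p z =>
    induction p using TensorProduct.induction_on with
    | zero => simp
    | tmul x y => simp
    | add u v hu hv => simp [add_tmul, hu, hv]
  | add u v hu hv => simp [hu, hv]

lemma plumb_first (f : H →ₗ[ℂ] H) (u : (H ⊗[ℂ] H) ⊗[ℂ] H) :
    (TensorProduct.assoc ℂ H H H).symm
        ((f.rTensor (H ⊗[ℂ] H)) ((TensorProduct.assoc ℂ H H H) u))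
      = ((f.rTensor H).rTensor H) u := by
  induction u using TensorProduct.induction_on with
  | zero => simp
  | tmul p z =>
    induction p using TensorProduct.induction_on with
    | zero => simp
    | tmul x y => simp
    | add u v hu hv => simp [add_tmul, hu, hv]
  | add u v hu hv => simp [hu, hv]

lemma plumb_swap (f : H →ₗ[ℂ] H) (u : H ⊗[ℂ] H) :
    (LinearMap.lTensor H Δ) ((f.rTensor H) u)
      = (f.rTensor (H ⊗[ℂ] H)) ((LinearMap.lTensor H Δ) u) := by
  induction u using TensorProduct.induction_on with
  | zero => simp
  | tmul x y => simp
  | add u v hu hv => simp [hu, hv]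

lemma th'_comul (h : H) : th' (Δ h) = (1 : H) ⊗ₜ[ℂ] h := by
  have step1 : th' (Δ h)
      = (LinearMap.mul' ℂ H).rTensor H ((TensorProduct.assoc ℂ H H H).symm
          (((S (H := H)).rTensor H).lTensor H ((TensorProduct.assoc ℂ H H H)
            (Δ.rTensor H (Δ h))))) := by
    simp only [th', LinearMap.comp_apply, LinearEquiv.coe_coe, LinearMap.lTensor_comp]
    rw [Coalgebra.coassoc_apply]
  rw [step1, plumb_mid, ← LinearMap.rTensor_comp_apply, ← LinearMap.rTensor_comp_apply,
    LinearMap.comp_assoc, HopfAlgebra.mul_antipode_lTensor_comul,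
    LinearMap.rTensor_comp_apply, Coalgebra.rTensor_counit_comul]
  simp

lemma th_rTensorS_comul (h : H) : th ((S (H := H)).rTensor H (Δ h)) = (1 : H) ⊗ₜ[ℂ] h := by
  have step1 : th ((S (H := H)).rTensor H (Δ h))
      = (LinearMap.mul' ℂ H).rTensor H ((TensorProduct.assoc ℂ H H H).symm
          (((S (H := H)).rTensor (H ⊗[ℂ] H)) ((TensorProduct.assoc ℂ H H H)
            (Δ.rTensor H (Δ h))))) := by
    simp only [th, LinearMap.comp_apply, LinearEquiv.coe_coe]
    rw [plumb_swap, Coalgebra.coassoc_apply]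
  rw [step1, plumb_first, ← LinearMap.rTensor_comp_apply, ← LinearMap.rTensor_comp_apply,
    LinearMap.comp_assoc, HopfAlgebra.mul_antipode_rTensor_comul,
    LinearMap.rTensor_comp_apply, Coalgebra.rTensor_counit_comul]
  simp

lemma th'_mulLeft (a : H) (t : H ⊗[ℂ] H) :
    th' ((LinearMap.mulLeft ℂ a).rTensor H t) = (LinearMap.mulLeft ℂ a).rTensor H (th' t) := by
  induction t using TensorProduct.induction_on with
  | zero => simp
  | tmul x y =>
    rw [LinearMap.rTensor_tmul, LinearMap.mulLeft_apply, th'_tmul, th'_tmul,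
      LinearMap.mulLeft_mul, LinearMap.comp_assoc, LinearMap.rTensor_comp_apply]
  | add u v hu hv => simp [hu, hv]

lemma th_mulLeft (a : H) (t : H ⊗[ℂ] H) :
    th ((LinearMap.mulLeft ℂ a).rTensor H t) = (LinearMap.mulLeft ℂ a).rTensor H (th t) := by
  induction t using TensorProduct.induction_on with
  | zero => simp
  | tmul x y =>
    rw [LinearMap.rTensor_tmul, LinearMap.mulLeft_apply, th_tmul, th_tmul,
      LinearMap.mulLeft_mul, LinearMap.rTensor_comp_apply]
  | add u v hu hv => simp [hu, hv]

lemma th'_th (x : H ⊗[ℂ] H) : th' (th x) = x := by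
  induction x using TensorProduct.induction_on with
  | zero => simp
  | tmul a h => rw [th_tmul, th'_mulLeft, th'_comul]; simp
  | add u v hu hv => simp [hu, hv]

lemma th_core (x k : H) :
    th ((LinearMap.mulLeft ℂ x ∘ₗ S).rTensor H (Δ k)) = x ⊗ₜ[ℂ] k := by
  rw [LinearMap.rTensor_comp_apply, th_mulLeft, th_rTensorS_comul]
  simp

lemma th_th' (x : H ⊗[ℂ] H) : th (th' x) = x := by
  induction x using TensorProduct.induction_on with
  | zero => simp
  | tmul c k => rw [th'_tmul, th_core]
  | add u v hu hv => simp [hu, hv]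

end Aux2

section Aux3
set_option synthInstance.maxHeartbeats 400000
set_option maxHeartbeats 1000000

open LinearMap

lemma th_lTensor_mulRight (g : H) (t : H ⊗[ℂ] H) :
    th ((LinearMap.mulRight ℂ g).lTensor H t) = th t * Δ g := by
  induction t using TensorProduct.induction_on with
  | zero => simp
  | tmul c k =>
    rw [LinearMap.lTensor_tmul, LinearMap.mulRight_apply, th_tmul, th_tmul,
      rTensor_mulLeft_eq, rTensor_mulLeft_eq, Bialgebra.comul_mul, mul_assoc]
  | add u v hu hv => simp [add_mul, hu, hv]

lemma muM_tmul (a h b g : H) :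
    μM (a ⊗ₜ[ℂ] h) (b ⊗ₜ[ℂ] g)
      = TensorProduct.map
          (LinearMap.mul' ℂ H ∘ₗ
            TensorProduct.map (LinearMap.mulRight ℂ b ∘ₗ LinearMap.mulLeft ℂ a) S)
          (LinearMap.mulRight ℂ g) (Δ2' h) := by
  have e0 : μM (a ⊗ₜ[ℂ] h) (b ⊗ₜ[ℂ] g) = mulAction2
      ((TensorProduct.map (TensorProduct.map (LinearMap.mulLeft ℂ a) S) LinearMap.id)
        (Δ2' h)) (b ⊗ₜ[ℂ] g) := by
    simp [μM]
  rw [e0]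
  generalize Δ2' (h : H) = t
  induction t using TensorProduct.induction_on with
  | zero => simp
  | tmul p w =>
    induction p using TensorProduct.induction_on with
    | zero => simp
    | tmul u v => simp [mulAction2]
    | add x y hx hy => simp only [add_tmul, map_add, LinearMap.add_apply, hx, hy]
  | add x y hx hy => simp only [map_add, LinearMap.add_apply, hx, hy]

lemma th_map_core (a b : H) (w : H ⊗[ℂ] H) :
    th ((LinearMap.mul' ℂ H ∘ₗ
          TensorProduct.map (LinearMap.mulRight ℂ b ∘ₗ LinearMap.mulLeft ℂ a) S).rTensor H
        ((TensorProduct.assoc ℂ H H H).symm ((LinearMap.lTensor H Δ) w)))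
      = (LinearMap.mulRight ℂ b ∘ₗ LinearMap.mulLeft ℂ a).rTensor H w := by
  induction w using TensorProduct.induction_on with
  | zero => simp
  | tmul x k =>
    rw [LinearMap.lTensor_tmul, assoc_symm_tmul_eq, ← LinearMap.rTensor_comp_apply]
    have e : (LinearMap.mul' ℂ H ∘ₗ
          TensorProduct.map (LinearMap.mulRight ℂ b ∘ₗ LinearMap.mulLeft ℂ a) S) ∘ₗ
            TensorProduct.mk ℂ H H x
        = LinearMap.mulLeft ℂ (a * x * b) ∘ₗ S := by
      ext v; simp [mul_assoc]
    rw [e, th_core]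
    simp
  | add u v hu hv => simp [hu, hv]

lemma th_muM_tmul (a h b g : H) :
    th (μM (a ⊗ₜ[ℂ] h) (b ⊗ₜ[ℂ] g)) = th (a ⊗ₜ[ℂ] h) * th (b ⊗ₜ[ℂ] g) := by
  rw [muM_tmul]
  have e1 : ∀ t : (H ⊗[ℂ] H) ⊗[ℂ] H,
      TensorProduct.map
        (LinearMap.mul' ℂ H ∘ₗ
          TensorProduct.map (LinearMap.mulRight ℂ b ∘ₗ LinearMap.mulLeft ℂ a) S)
        (LinearMap.mulRight ℂ g) t
      = (LinearMap.mulRight ℂ g).lTensor H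
          ((LinearMap.mul' ℂ H ∘ₗ
            TensorProduct.map (LinearMap.mulRight ℂ b ∘ₗ LinearMap.mulLeft ℂ a) S).rTensor H t) :=
    fun t => by rw [← LinearMap.lTensor_comp_rTensor]; rfl
  have e2 : Δ2' (h : H) = (TensorProduct.assoc ℂ H H H).symm
      ((LinearMap.lTensor H Δ) (Δ h)) := (Coalgebra.coassoc_symm_apply h).symm
  rw [e1, e2, th_lTensor_mulRight, th_map_core, th_tmul, th_tmul,
    rTensor_mulLeft_eq, rTensor_mulLeft_eq]
  have e3 : (LinearMap.mulRight ℂ b ∘ₗ LinearMap.mulLeft ℂ a).rTensor H (Δ h)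
      = ((a ⊗ₜ[ℂ] (1:H)) * Δ h) * (b ⊗ₜ[ℂ] (1:H)) := by
    generalize Δ (h : H) = t
    induction t using TensorProduct.induction_on with
    | zero => simp
    | tmul x y => simp [Algebra.TensorProduct.tmul_mul_tmul]
    | add u v hu hv => simp [mul_add, add_mul, hu, hv]
  rw [e3]; simp only [mul_assoc]

lemma th_muM (x y : H ⊗[ℂ] H) : th (μM x y) = th x * th y := by
  induction x using TensorProduct.induction_on with
  | zero => simp
  | tmul a h =>
    induction y using TensorProduct.induction_on with
    | zero => simp
    | tmul b g => exact th_muM_tmul a h b g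
    | add u v hu hv => simp only [map_add, hu, hv, mul_add]
  | add u v hu hv => simp only [map_add, LinearMap.add_apply, hu, hv, add_mul]

lemma muM_eq (x y : H ⊗[ℂ] H) : μM x y = th' (th x * th y) := by
  rw [← th_muM, th'_th]

end Aux3

section Aux4
set_option synthInstance.maxHeartbeats 400000
set_option maxHeartbeats 1000000

open LinearMap

/-- The comultiplication of `H^cop`. -/
def Dcop : H →ₗ[ℂ] H ⊗[ℂ] H := (TensorProduct.comm ℂ H H).toLinearMap ∘ₗ Δ

/-- The coproduct of the tensor-product bialgebra `H^cop ⊗ H`. -/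
def DT : H ⊗[ℂ] H →ₗ[ℂ] (H ⊗[ℂ] H) ⊗[ℂ] (H ⊗[ℂ] H) :=
  (Algebra.TensorProduct.tensorTensorTensorComm ℂ ℂ ℂ ℂ H H H H).toLinearMap ∘ₗ
    TensorProduct.map Dcop Δ

lemma comm_mul (p q : H ⊗[ℂ] H) :
    (TensorProduct.comm ℂ H H) (p * q)
      = (TensorProduct.comm ℂ H H) p * (TensorProduct.comm ℂ H H) q := by
  induction p using TensorProduct.induction_on with
  | zero => simp
  | tmul x y =>
    induction q using TensorProduct.induction_on with
    | zero => simp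
    | tmul x' y' => simp [Algebra.TensorProduct.tmul_mul_tmul]
    | add u v hu hv => simp only [mul_add, map_add, hu, hv]
  | add u v hu hv => simp only [add_mul, map_add, hu, hv]

lemma Dcop_mul (c c' : H) : Dcop (c * c') = Dcop c * Dcop c' := by
  simp only [Dcop, LinearMap.comp_apply, Bialgebra.comul_mul, LinearEquiv.coe_coe, comm_mul]

lemma DT_tmul (c k : H) : DT (c ⊗ₜ[ℂ] k)
    = (Algebra.TensorProduct.tensorTensorTensorComm ℂ ℂ ℂ ℂ H H H H) (Dcop c ⊗ₜ[ℂ] Δ k) := by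
  simp [DT]
  rfl

lemma DT_mul (u v : H ⊗[ℂ] H) : DT (u * v) = DT u * DT v := by
  induction u using TensorProduct.induction_on with
  | zero => simp
  | tmul c k =>
    induction v using TensorProduct.induction_on with
    | zero => simp
    | tmul c' k' =>
      rw [Algebra.TensorProduct.tmul_mul_tmul, DT_tmul, DT_tmul, DT_tmul, Dcop_mul,
        Bialgebra.comul_mul, ← Algebra.TensorProduct.tmul_mul_tmul, map_mul]
    | add p q hp hq => simp only [mul_add, map_add, hp, hq]
  | add p q hp hq => simp only [add_mul, map_add, hp, hq]

end Aux4

section Aux5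
set_option synthInstance.maxHeartbeats 400000
set_option maxHeartbeats 1000000

open LinearMap

/-- Cyclic shift `x ⊗ (y ⊗ z) ↦ y ⊗ (x ⊗ z)`. -/
def sigma0 : H ⊗[ℂ] (H ⊗[ℂ] H) →ₗ[ℂ] H ⊗[ℂ] (H ⊗[ℂ] H) :=
  (TensorProduct.assoc ℂ H H H).toLinearMap ∘ₗ
    ((TensorProduct.comm ℂ H H).toLinearMap.rTensor H) ∘ₗ
      (TensorProduct.assoc ℂ H H H).symm.toLinearMap

lemma sigma0_tmul (x y z : H) :
    sigma0 (x ⊗ₜ[ℂ] (y ⊗ₜ[ℂ] z)) = y ⊗ₜ[ℂ] (x ⊗ₜ[ℂ] z) := by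
  simp [sigma0]

/-- Regrouping `x ⊗ ((p ⊗ q) ⊗ z) ↦ (x ⊗ p) ⊗ (q ⊗ z)`. -/
def psi' : H ⊗[ℂ] ((H ⊗[ℂ] H) ⊗[ℂ] H) →ₗ[ℂ] (H ⊗[ℂ] H) ⊗[ℂ] (H ⊗[ℂ] H) :=
  (TensorProduct.assoc ℂ (H ⊗[ℂ] H) H H).toLinearMap ∘ₗ
    ((TensorProduct.assoc ℂ H H H).symm.toLinearMap.rTensor H) ∘ₗ
      (TensorProduct.assoc ℂ H (H ⊗[ℂ] H) H).symm.toLinearMap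

lemma plumb6 (u : (H ⊗[ℂ] H) ⊗[ℂ] H) :
    LinearMap.lTensor H (LinearMap.rTensor H Δ) ((TensorProduct.assoc ℂ H H H) u)
      = (TensorProduct.assoc ℂ H (H ⊗[ℂ] H) H) ((LinearMap.lTensor H Δ).rTensor H u) := by
  induction u using TensorProduct.induction_on with
  | zero => simp
  | tmul p z =>
    induction p using TensorProduct.induction_on with
    | zero => simp
    | tmul x y => simp
    | add s t hs ht => simp only [add_tmul, map_add, hs, ht]
  | add s t hs ht => simp only [map_add, hs, ht]

lemma plumb7 (u : (H ⊗[ℂ] H) ⊗[ℂ] H) :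
    Δ.rTensor (H ⊗[ℂ] H) ((TensorProduct.assoc ℂ H H H) u)
      = (TensorProduct.assoc ℂ (H ⊗[ℂ] H) H H) ((Δ.rTensor H).rTensor H u) := by
  induction u using TensorProduct.induction_on with
  | zero => simp
  | tmul p z =>
    induction p using TensorProduct.induction_on with
    | zero => simp
    | tmul x y => simp
    | add s t hs ht => simp only [add_tmul, map_add, hs, ht]
  | add s t hs ht => simp only [map_add, hs, ht]

lemma plumb8 (v : ((H ⊗[ℂ] H) ⊗[ℂ] H) ⊗[ℂ] H) :
    (TensorProduct.assoc ℂ (H ⊗[ℂ] H) H H) v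
      = psi' ((TensorProduct.assoc ℂ H (H ⊗[ℂ] H) H)
          (((TensorProduct.assoc ℂ H H H).toLinearMap).rTensor H v)) := by
  induction v using TensorProduct.induction_on with
  | zero => simp
  | tmul p z =>
    induction p using TensorProduct.induction_on with
    | zero => simp
    | tmul s y =>
      induction s using TensorProduct.induction_on with
      | zero => simp [add_tmul]
      | tmul x w => simp [psi']
      | add s t hs ht => simp only [add_tmul, map_add, hs, ht]
    | add s t hs ht => simp only [add_tmul, map_add, hs, ht]
  | add s t hs ht => simp only [map_add, hs, ht]

lemma four_coassoc (h : H) :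
    TensorProduct.map Δ Δ (Δ h)
      = psi' ((LinearMap.lTensor H (LinearMap.rTensor H Δ)) (Δ2 h)) := by
  have co : (LinearMap.lTensor H Δ) ∘ₗ (Δ : H →ₗ[ℂ] H ⊗[ℂ] H)
      = (TensorProduct.assoc ℂ H H H).toLinearMap ∘ₗ (LinearMap.rTensor H Δ) ∘ₗ Δ :=
    LinearMap.ext fun h => (Coalgebra.coassoc_apply h).symm
  have e1 : TensorProduct.map Δ Δ (Δ h)
      = Δ.rTensor (H ⊗[ℂ] H) ((LinearMap.lTensor H Δ) (Δ h)) := by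
    rw [← LinearMap.rTensor_comp_lTensor]; rfl
  have e2 : (LinearMap.lTensor H Δ) (Δ h)
      = (TensorProduct.assoc ℂ H H H) ((LinearMap.rTensor H Δ) (Δ h)) :=
    (Coalgebra.coassoc_apply h).symm
  have e2' : Δ2 (h : H) = (TensorProduct.assoc ℂ H H H) ((LinearMap.rTensor H Δ) (Δ h)) :=
    (Coalgebra.coassoc_apply h).symm
  conv_lhs => rw [e1, e2, plumb7]
  conv_rhs => rw [e2', plumb6, ← LinearMap.rTensor_comp_apply, co,
    LinearMap.rTensor_comp_apply, LinearMap.rTensor_comp_apply]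
  exact plumb8 _

lemma PL (s₁ s₃ : H) (P : H ⊗[ℂ] H) :
    (Algebra.TensorProduct.tensorTensorTensorComm ℂ ℂ ℂ ℂ H H H H)
        (TensorProduct.map (TensorProduct.comm ℂ H H).toLinearMap LinearMap.id
          (psi' (s₁ ⊗ₜ[ℂ] (P ⊗ₜ[ℂ] s₃))))
      = P ⊗ₜ[ℂ] (s₁ ⊗ₜ[ℂ] s₃) := by
  induction P using TensorProduct.induction_on with
  | zero => simp
  | tmul p q => simp [psi']
  | add u v hu hv => simp only [add_tmul, tmul_add, map_add, hu, hv]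

lemma HDTD (u : H ⊗[ℂ] (H ⊗[ℂ] H)) :
    TensorProduct.map th' th'
        ((Algebra.TensorProduct.tensorTensorTensorComm ℂ ℂ ℂ ℂ H H H H)
          (TensorProduct.map (TensorProduct.comm ℂ H H).toLinearMap LinearMap.id
            (psi' ((LinearMap.lTensor H (LinearMap.rTensor H Δ)) u))))
      = TensorProduct.map (TensorProduct.mk ℂ H H 1) th' (sigma0 u) := by
  induction u using TensorProduct.induction_on with
  | zero => simp
  | tmul x t =>
    induction t using TensorProduct.induction_on with
    | zero => simp [TensorProduct.tmul_zero]
    | tmul y z =>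
      rw [LinearMap.lTensor_tmul, LinearMap.rTensor_tmul, PL, TensorProduct.map_tmul,
        th'_comul, sigma0_tmul, TensorProduct.map_tmul]
      simp
    | add p q hp hq => simp only [TensorProduct.tmul_add, map_add, hp, hq]
  | add p q hp hq => simp only [map_add, hp, hq]

lemma DM1 (x y : H) (P : H ⊗[ℂ] H) :
    deltaMAux (1:H) (1:H) (x ⊗ₜ[ℂ] (y ⊗ₜ[ℂ] P))
      = ((1:H) ⊗ₜ[ℂ] y) ⊗ₜ[ℂ] ((LinearMap.mulLeft ℂ x ∘ₗ S).rTensor H P) := by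
  induction P using TensorProduct.induction_on with
  | zero => simp [deltaMAux]
  | tmul p w => simp [deltaMAux]
  | add u v hu hv => simp only [TensorProduct.tmul_add, map_add, hu, hv]

lemma HII (u : H ⊗[ℂ] (H ⊗[ℂ] H)) :
    deltaMAux (1:H) (1:H) (LinearMap.lTensor H (LinearMap.lTensor H Δ) u)
      = TensorProduct.map (TensorProduct.mk ℂ H H 1) th' (sigma0 u) := by
  induction u using TensorProduct.induction_on with
  | zero => simp
  | tmul x t =>
    induction t using TensorProduct.induction_on with
    | zero => simp [TensorProduct.tmul_zero]
    | tmul y z =>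
      rw [LinearMap.lTensor_tmul, LinearMap.lTensor_tmul, DM1, sigma0_tmul,
        TensorProduct.map_tmul, th'_tmul]
      simp
    | add p q hp hq => simp only [TensorProduct.tmul_add, map_add, hp, hq]
  | add p q hp hq => simp only [map_add, hp, hq]

lemma DTD (h : H) :
    TensorProduct.map th' th' (DT (Δ h)) = deltaMAux (1:H) (1:H) (Δ3 h) := by
  have e0 : TensorProduct.map Dcop Δ
      = TensorProduct.map ((TensorProduct.comm ℂ H H).toLinearMap)
            (LinearMap.id : H ⊗[ℂ] H →ₗ[ℂ] H ⊗[ℂ] H) ∘ₗ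
          TensorProduct.map Δ Δ := by
    ext c k
    simp [Dcop]
  have e1 : DT (Δ h) = (Algebra.TensorProduct.tensorTensorTensorComm ℂ ℂ ℂ ℂ H H H H)
      (TensorProduct.map (TensorProduct.comm ℂ H H).toLinearMap LinearMap.id
        (TensorProduct.map Δ Δ (Δ h))) := by
    rw [DT, LinearMap.comp_apply, e0, LinearMap.comp_apply]
    rfl
  have e3 : (Δ3 : H →ₗ[ℂ] _)
      = LinearMap.lTensor H (LinearMap.lTensor H Δ) ∘ₗ (Δ2 : H →ₗ[ℂ] _) := by
    unfold Δ3 Δ2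
    rw [LinearMap.lTensor_comp, LinearMap.comp_assoc]
  rw [e1, four_coassoc, HDTD, LinearMap.congr_fun e3 h, LinearMap.comp_apply, HII]

end Aux5

section Aux6
set_option synthInstance.maxHeartbeats 400000
set_option maxHeartbeats 1000000

open LinearMap

lemma deltaMAux_shift (p q : H) (u : H ⊗[ℂ] (H ⊗[ℂ] (H ⊗[ℂ] H))) :
    deltaMAux p q u
      = TensorProduct.map ((LinearMap.mulLeft ℂ q).rTensor H)
          ((LinearMap.mulLeft ℂ p).rTensor H) (deltaMAux 1 1 u) := by
  induction u using TensorProduct.induction_on with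
  | zero => simp
  | tmul x t =>
    induction t using TensorProduct.induction_on with
    | zero => simp [TensorProduct.tmul_zero]
    | tmul y s =>
      induction s using TensorProduct.induction_on with
      | zero => simp [TensorProduct.tmul_zero]
      | tmul z w => simp [deltaMAux, mul_assoc]
      | add m n hm hn => simp only [TensorProduct.tmul_add, map_add, hm, hn]
    | add m n hm hn => simp only [TensorProduct.tmul_add, map_add, hm, hn]
  | add m n hm hn => simp only [map_add, hm, hn]

lemma mul_map_mulLeft (q p : H) (w : (H ⊗[ℂ] H) ⊗[ℂ] (H ⊗[ℂ] H)) :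
    ((q ⊗ₜ[ℂ] (1:H)) ⊗ₜ[ℂ] (p ⊗ₜ[ℂ] (1:H))) * w
      = TensorProduct.map ((LinearMap.mulLeft ℂ q).rTensor H)
          ((LinearMap.mulLeft ℂ p).rTensor H) w := by
  induction w using TensorProduct.induction_on with
  | zero => simp
  | tmul U V => simp [Algebra.TensorProduct.tmul_mul_tmul, rTensor_mulLeft_eq]
  | add m n hm hn => simp only [mul_add, map_add, hm, hn]

lemma map_th'_mulLeft (q p : H) (w : (H ⊗[ℂ] H) ⊗[ℂ] (H ⊗[ℂ] H)) :
    TensorProduct.map th' th'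
        (TensorProduct.map ((LinearMap.mulLeft ℂ q).rTensor H)
          ((LinearMap.mulLeft ℂ p).rTensor H) w)
      = TensorProduct.map ((LinearMap.mulLeft ℂ q).rTensor H)
          ((LinearMap.mulLeft ℂ p).rTensor H) (TensorProduct.map th' th' w) := by
  induction w using TensorProduct.induction_on with
  | zero => simp
  | tmul U V => simp [th'_mulLeft]
  | add m n hm hn => simp only [map_add, hm, hn]

lemma DeltaM_tmul (a h : H) : ΔM (a ⊗ₜ[ℂ] h) = deltaG (Δ a) (Δ3 h) := by
  simp [ΔM]

lemma DeltaM_eq (x : H ⊗[ℂ] H) : ΔM x = TensorProduct.map th' th' (DT (th x)) := by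
  induction x using TensorProduct.induction_on with
  | zero => simp
  | tmul a h =>
    rw [DeltaM_tmul, th_tmul, rTensor_mulLeft_eq, DT_mul, DT_tmul,
      Bialgebra.comul_one, Algebra.TensorProduct.one_def]
    have eD : Dcop (a : H) = (TensorProduct.comm ℂ H H) (Δ a) := rfl
    rw [eD]
    generalize Δ (a : H) = t
    induction t using TensorProduct.induction_on with
    | zero => simp
    | tmul p q =>
      have eG : deltaG (p ⊗ₜ[ℂ] q) = deltaMAux p q := by
        simp [deltaG]
      rw [eG, TensorProduct.comm_tmul, Algebra.TensorProduct.tensorTensorTensorComm_tmul,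
        mul_map_mulLeft, map_th'_mulLeft, DTD, deltaMAux_shift]
    | add m n hm hn =>
      simp only [map_add, LinearMap.add_apply, TensorProduct.add_tmul, add_mul, hm, hn]
  | add u v hu hv => simp only [map_add, hu, hv]

lemma tensorMul2_eq (u v : (H ⊗[ℂ] H) ⊗[ℂ] (H ⊗[ℂ] H)) :
    tensorMul2 (TensorProduct.map th' th' u) (TensorProduct.map th' th' v)
      = TensorProduct.map th' th' (u * v) := by
  induction u using TensorProduct.induction_on with
  | zero => simp
  | tmul U V =>
    induction v using TensorProduct.induction_on with
    | zero => simp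
    | tmul U' V' =>
      have e : ∀ (A B A' B' : H ⊗[ℂ] H), tensorMul2 (A ⊗ₜ[ℂ] B) (A' ⊗ₜ[ℂ] B')
          = μM A A' ⊗ₜ[ℂ] μM B B' := by
        intro A B A' B'
        simp [tensorMul2]
      rw [TensorProduct.map_tmul, TensorProduct.map_tmul, e,
        Algebra.TensorProduct.tmul_mul_tmul, TensorProduct.map_tmul]
      simp only [muM_eq, th_th']
    | add m n hm hn => simp only [map_add, mul_add, hm, hn]
  | add m n hm hn => simp only [map_add, add_mul, LinearMap.add_apply, hm, hn]

lemma epsM_tmul (c k : H) : εM (c ⊗ₜ[ℂ] k) = ε c * ε (k : H) := by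
  simp [εM, smul_eq_mul]

lemma counit_collapse (k : H) :
    LinearMap.mul' ℂ ℂ (TensorProduct.map ε ε (Δ k)) = ε (k : H) := by
  have e : TensorProduct.map (ε : H →ₗ[ℂ] ℂ) (ε : H →ₗ[ℂ] ℂ) (Δ k)
      = (ε : H →ₗ[ℂ] ℂ).rTensor ℂ (((ε : H →ₗ[ℂ] ℂ)).lTensor H (Δ k)) := by
    rw [← LinearMap.rTensor_comp_lTensor]; rfl
  rw [e, Coalgebra.lTensor_counit_comul]
  simp

lemma eps_map (a b g : H) (t : (H ⊗[ℂ] H) ⊗[ℂ] H) :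
    εM (TensorProduct.map
          (LinearMap.mul' ℂ H ∘ₗ
            TensorProduct.map (LinearMap.mulRight ℂ b ∘ₗ LinearMap.mulLeft ℂ a) S)
          (LinearMap.mulRight ℂ g) t)
      = (ε a * ε b * ε g) *
          (LinearMap.mul' ℂ ℂ
            (TensorProduct.map (LinearMap.mul' ℂ ℂ ∘ₗ TensorProduct.map ε ε) ε t)) := by
  induction t using TensorProduct.induction_on with
  | zero => simp
  | tmul p w =>
    induction p using TensorProduct.induction_on with
    | zero => simp
    | tmul u v =>
      simp only [TensorProduct.map_tmul, LinearMap.comp_apply, LinearMap.mulRight_apply,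
        LinearMap.mulLeft_apply, LinearMap.mul'_apply, epsM_tmul, Bialgebra.counit_mul,
        counit_S]
      ring
    | add m n hm hn => simp only [TensorProduct.add_tmul, map_add, hm, hn, mul_add]
  | add m n hm hn => simp only [map_add, hm, hn, mul_add]

lemma E3_comul (h : H) :
    LinearMap.mul' ℂ ℂ
        (TensorProduct.map (LinearMap.mul' ℂ ℂ ∘ₗ TensorProduct.map ε ε) ε (Δ2' h))
      = ε (h : H) := by
  have m : (LinearMap.mul' ℂ ℂ ∘ₗ TensorProduct.map (ε : H →ₗ[ℂ] ℂ) ε) ∘ₗ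
      (Δ : H →ₗ[ℂ] H ⊗[ℂ] H) = (ε : H →ₗ[ℂ] ℂ) := LinearMap.ext counit_collapse
  have e : TensorProduct.map (LinearMap.mul' ℂ ℂ ∘ₗ TensorProduct.map (ε : H →ₗ[ℂ] ℂ) ε)
        (ε : H →ₗ[ℂ] ℂ) ∘ₗ LinearMap.rTensor H Δ
      = TensorProduct.map ((LinearMap.mul' ℂ ℂ ∘ₗ TensorProduct.map (ε : H →ₗ[ℂ] ℂ) ε) ∘ₗ Δ)
          (ε : H →ₗ[ℂ] ℂ) := by
    ext x k
    simp
  have e' : TensorProduct.map (LinearMap.mul' ℂ ℂ ∘ₗ TensorProduct.map (ε : H →ₗ[ℂ] ℂ) ε)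
        (ε : H →ₗ[ℂ] ℂ) (LinearMap.rTensor H Δ (Δ h))
      = TensorProduct.map ((LinearMap.mul' ℂ ℂ ∘ₗ TensorProduct.map (ε : H →ₗ[ℂ] ℂ) ε) ∘ₗ Δ)
          (ε : H →ₗ[ℂ] ℂ) (Δ h) := LinearMap.congr_fun e (Δ h)
  have d : Δ2' (h : H) = LinearMap.rTensor H Δ (Δ h) := rfl
  rw [d, e', m, counit_collapse]

lemma DeltaM_one : ΔM (oneM (H := H)) = oneM ⊗ₜ[ℂ] oneM := by
  have o : oneM (H := H) = (1 : H) ⊗ₜ[ℂ] (1 : H) := rfl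
  have d3 : Δ3 (1 : H) = (1:H) ⊗ₜ[ℂ] ((1:H) ⊗ₜ[ℂ] ((1:H) ⊗ₜ[ℂ] (1:H))) := by
    simp [Δ3, Δ2, Algebra.TensorProduct.one_def]
  have eG : deltaG ((1:H) ⊗ₜ[ℂ] (1:H)) = deltaMAux 1 1 := by
    simp [deltaG]
  rw [o, DeltaM_tmul, Bialgebra.comul_one, Algebra.TensorProduct.one_def, eG, d3]
  simp [deltaMAux, S_one]

end Aux6

/-- The coproduct `Δ_M` is an algebra homomorphism from `M(H)` to
`M(H) ⊗ M(H)` (with componentwise product): `Δ_M(x · y) = Δ_M(x) · Δ_M(y)` and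
`Δ_M(1⊗1) = (1⊗1) ⊗ (1⊗1)`; moreover `ε_M` is an algebra homomorphism.  Hence
`(M(H), ·, Δ_M, ε_M)` is a bialgebra. -/
theorem statement14 :
    (∀ x y : H ⊗[ℂ] H, ΔM (μM x y) = tensorMul2 (ΔM x) (ΔM y)) ∧
    (ΔM (oneM (H := H)) = oneM ⊗ₜ[ℂ] oneM) ∧
    (∀ x y : H ⊗[ℂ] H, εM (μM x y) = εM x * εM y) ∧
    (εM (oneM (H := H)) = 1) := by
  refine ⟨?_, ?_, ?_, ?_⟩
  · intro x y
    rw [DeltaM_eq (μM x y), th_muM, DT_mul, DeltaM_eq x, DeltaM_eq y, tensorMul2_eq]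
  · exact DeltaM_one
  · intro x y
    induction x using TensorProduct.induction_on with
    | zero => simp
    | tmul a h =>
      induction y using TensorProduct.induction_on with
      | zero => simp
      | tmul b g =>
        rw [muM_tmul, eps_map, E3_comul, epsM_tmul, epsM_tmul]
        ring
      | add m n hm hn => simp only [map_add, mul_add, hm, hn]
    | add m n hm hn => simp only [map_add, LinearMap.add_apply, add_mul, hm, hn]
  · have o : oneM (H := H) = (1 : H) ⊗ₜ[ℂ] (1 : H) := rfl
    rw [o, epsM_tmul]
    simp

end SemidualKitaev
end
end
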